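/- arXiv:2112.08681 — 9 statements merged into one kernel-verified Lean document; each statement's English description precedes it below -/
import Mathlib

section
/- Let G be a finite group, let p be a prime, let N be a normal p-subgroup of G and let x be a p-element of G. Then |C_G(x)_p| / |G_p| ≤ |C_{G/N}(Nx)_p| / |(G/N)_p|; equivalently, |C_G(x)_p| · |(G/N)_p| ≤ |C_{G/N}(Nx)_p| · |G_p|, where Nx denotes the image of x in G/N. -/
/-- `x` is a `p`-element: its order is a power of `p`. -/
def pElem {G : Type*} [Group G] (p : ℕ) (x : G) : Prop := ∃ k : ℕ, orderOf x = p ^ k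

lemma pElem_iff_pow {G : Type*} [Group G] {p : ℕ} (hp : p.Prime) (x : G) :
    pElem p x ↔ ∃ k : ℕ, x ^ p ^ k = 1 := by
  constructor
  · rintro ⟨k, hk⟩
    exact ⟨k, by rw [← hk]; exact pow_orderOf_eq_one x⟩
  · rintro ⟨k, hk⟩
    obtain ⟨j, -, hj⟩ := (Nat.dvd_prime_pow hp).mp (orderOf_dvd_of_pow_eq_one hk)
    exact ⟨j, hj⟩

lemma pElem_mk_iff {G : Type*} [Group G] {p : ℕ} (hp : p.Prime)
    {N : Subgroup G} [N.Normal] (hN : IsPGroup p N) (y : G) :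
    pElem p (QuotientGroup.mk y : G ⧸ N) ↔ pElem p y := by
  rw [pElem_iff_pow hp, pElem_iff_pow hp]
  constructor
  · rintro ⟨k, hk⟩
    have hmem : y ^ p ^ k ∈ N := by
      rw [← QuotientGroup.eq_one_iff]
      simpa using hk
    obtain ⟨m, hm⟩ := hN ⟨y ^ p ^ k, hmem⟩
    refine ⟨k + m, ?_⟩
    have h2 : (y ^ p ^ k) ^ p ^ m = 1 := congrArg Subtype.val hm
    rw [pow_add, pow_mul]
    exact h2
  · rintro ⟨k, hk⟩
    exact ⟨k, by rw [← QuotientGroup.mk_pow, hk, QuotientGroup.mk_one]⟩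

/-- If `N` is a normal `p`-subgroup of a finite group `G` and `x` is a `p`-element, then
`|C_G(x)_p| / |G_p| ≤ |C_{G/N}(Nx)_p| / |(G/N)_p|`. -/
theorem lem_quop_i (G : Type*) [Group G] [Finite G] (p : ℕ) (hp : p.Prime)
    (N : Subgroup G) [N.Normal] (hN : IsPGroup p N)
    (x : G) (hx : pElem p x) :
    Nat.card {y : G // pElem p y ∧ x * y = y * x} *
        Nat.card {z : G ⧸ N // pElem p z} ≤
      Nat.card {z : G ⧸ N // pElem p z ∧
          (QuotientGroup.mk x : G ⧸ N) * z = z * (QuotientGroup.mk x : G ⧸ N)} *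
        Nat.card {y : G // pElem p y} := by
  have key : ∀ y : G, pElem p (QuotientGroup.mk y : G ⧸ N) ↔ pElem p y :=
    fun y => pElem_mk_iff hp hN y
  have memN : ∀ y : G, ((QuotientGroup.mk y : G ⧸ N)).out⁻¹ * y ∈ N := by
    intro y
    rw [← QuotientGroup.eq (s := N)]
    exact Quotient.out_eq _
  -- |G_p| = |(G/N)_p| * |N|
  have hP : Nat.card {y : G // pElem p y} =
      Nat.card {z : G ⧸ N // pElem p z} * Nat.card N := by
    rw [← Nat.card_prod]
    apply Nat.card_congr
    refine Equiv.ofBijective (fun y =>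
      (⟨QuotientGroup.mk y.1, (key y.1).mpr y.2⟩,
       ⟨((QuotientGroup.mk y.1 : G ⧸ N)).out⁻¹ * y.1, memN y.1⟩)) ⟨?_, ?_⟩
    · rintro ⟨y₁, h₁⟩ ⟨y₂, h₂⟩ h
      have hq : (QuotientGroup.mk y₁ : G ⧸ N) = QuotientGroup.mk y₂ :=
        congrArg (fun a => (a.1 : G ⧸ N)) (congrArg Prod.fst h)
      have hn : ((QuotientGroup.mk y₁ : G ⧸ N)).out⁻¹ * y₁ =
          ((QuotientGroup.mk y₂ : G ⧸ N)).out⁻¹ * y₂ :=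
        congrArg (fun a => (a.2 : G)) h
      rw [hq] at hn
      exact Subtype.ext (mul_left_cancel hn)
    · rintro ⟨⟨z, hz⟩, ⟨n, hn⟩⟩
      refine ⟨⟨z.out * n, ?_⟩, ?_⟩
      · have hmk : (QuotientGroup.mk (z.out * n) : G ⧸ N) = z := by
          rw [QuotientGroup.mk_mul]
          rw [(QuotientGroup.eq_one_iff n).mpr hn]
          simpa using z.out_eq
        exact (key _).mp (by rw [hmk]; exact hz)
      · have hmk : (QuotientGroup.mk (z.out * n) : G ⧸ N) = z := by
          rw [QuotientGroup.mk_mul]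
          rw [(QuotientGroup.eq_one_iff n).mpr hn]
          simpa using z.out_eq
        refine Prod.ext (Subtype.ext hmk) (Subtype.ext ?_)
        simp [hmk]
  -- |C_G(x)_p| ≤ |C_{G/N}(x̄)_p| * |N|
  have hA : Nat.card {y : G // pElem p y ∧ x * y = y * x} ≤
      Nat.card {z : G ⧸ N // pElem p z ∧
          (QuotientGroup.mk x : G ⧸ N) * z = z * (QuotientGroup.mk x : G ⧸ N)} *
        Nat.card N := by
    rw [← Nat.card_prod]
    apply Nat.card_le_card_of_injective (fun y =>
      (⟨QuotientGroup.mk y.1, (key y.1).mpr y.2.1, by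
          rw [← QuotientGroup.mk_mul, ← QuotientGroup.mk_mul, y.2.2]⟩,
       ⟨((QuotientGroup.mk y.1 : G ⧸ N)).out⁻¹ * y.1, memN y.1⟩))
    rintro ⟨y₁, h₁⟩ ⟨y₂, h₂⟩ h
    have hq : (QuotientGroup.mk y₁ : G ⧸ N) = QuotientGroup.mk y₂ :=
      congrArg (fun a => (a.1 : G ⧸ N)) (congrArg Prod.fst h)
    have hn : ((QuotientGroup.mk y₁ : G ⧸ N)).out⁻¹ * y₁ =
        ((QuotientGroup.mk y₂ : G ⧸ N)).out⁻¹ * y₂ :=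
      congrArg (fun a => (a.2 : G)) h
    rw [hq] at hn
    exact Subtype.ext (mul_left_cancel hn)
  calc Nat.card {y : G // pElem p y ∧ x * y = y * x} *
        Nat.card {z : G ⧸ N // pElem p z}
      ≤ (Nat.card {z : G ⧸ N // pElem p z ∧
          (QuotientGroup.mk x : G ⧸ N) * z = z * (QuotientGroup.mk x : G ⧸ N)} *
        Nat.card N) * Nat.card {z : G ⧸ N // pElem p z} :=
        Nat.mul_le_mul_right _ hA
    _ = _ := by rw [hP]; ring
end

section
/- Let G be a finite group, let p be a prime and let N be a normal p-subgroup of G. Then Pr_p(G) ≤ Pr_p(G/N). -/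
/-- The probability that two random `p`-elements of `G` commute. -/
noncomputable def prP (G : Type*) [Group G] (p : ℕ) : ℚ :=
  (Nat.card {xy : G × G // pElem p xy.1 ∧ pElem p xy.2 ∧ xy.1 * xy.2 = xy.2 * xy.1} : ℚ) /
    (Nat.card {x : G // pElem p x} : ℚ) ^ 2

lemma pElem_one' {G : Type*} [Group G] (p : ℕ) : pElem p (1 : G) := ⟨0, by simp⟩

/-- If `N` is a normal `p`-subgroup of a finite group `G`, then `Pr_p(G) ≤ Pr_p(G/N)`. -/
theorem lem_quop_ii (G : Type*) [Group G] [Finite G] (p : ℕ) (hp : p.Prime)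
    (N : Subgroup G) [N.Normal] (hN : IsPGroup p N) :
    prP G p ≤ prP (G ⧸ N) p := by
  classical
  set π : G →* G ⧸ N := QuotientGroup.mk' N with hπ
  have hmap : ∀ x : G, pElem p x → pElem p (π x) := by
    rintro x ⟨k, hk⟩
    have h : orderOf (π x) ∣ p ^ k := hk ▸ orderOf_map_dvd π x
    obtain ⟨j, -, hj⟩ := (Nat.dvd_prime_pow hp).mp h
    exact ⟨j, hj⟩
  have hlift : ∀ x : G, pElem p (π x) → pElem p x := by
    rintro x ⟨k, hk⟩
    have h1 : π (x ^ p ^ k) = 1 := by rw [map_pow, ← hk, pow_orderOf_eq_one]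
    have hmem : x ^ p ^ k ∈ N := (QuotientGroup.eq_one_iff _).mp h1
    obtain ⟨m, hm⟩ := hN ⟨x ^ p ^ k, hmem⟩
    have hm' : x ^ p ^ (k + m) = 1 := by
      have h2 := congrArg (Subtype.val) hm
      simp only [SubmonoidClass.coe_pow, OneMemClass.coe_one] at h2
      rw [pow_add, pow_mul]
      exact h2
    obtain ⟨j, -, hj⟩ := (Nat.dvd_prime_pow hp).mp (orderOf_dvd_of_pow_eq_one hm')
    exact ⟨j, hj⟩
  set s : G ⧸ N → G := Quotient.out with hs
  have hsec : ∀ q : G ⧸ N, π (s q) = q := fun q => Quotient.out_eq q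
  have hNmem : ∀ x : G, (s (π x))⁻¹ * x ∈ N := by
    intro x
    rw [← QuotientGroup.eq_one_iff]
    show π ((s (π x))⁻¹ * x) = 1
    rw [map_mul, map_inv, hsec, inv_mul_cancel]
  have hmul : ∀ (q : G ⧸ N) (n : N), π (s q * (n : G)) = q := by
    intro q n
    have h1 : π (n : G) = 1 := (QuotientGroup.eq_one_iff _).mpr n.2
    rw [map_mul, h1, mul_one, hsec]
  -- equivalence for the denominator
  let e : {x : G // pElem p x} ≃ {q : G ⧸ N // pElem p q} × N :=
    { toFun := fun x => (⟨π x.1, hmap _ x.2⟩, ⟨(s (π x.1))⁻¹ * x.1, hNmem x.1⟩)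
      invFun := fun qn => ⟨s qn.1.1 * (qn.2 : G), hlift _ (by rw [hmul]; exact qn.1.2)⟩
      left_inv := fun x => by
        ext
        simp [mul_inv_cancel_left]
      right_inv := fun qn => by
        obtain ⟨⟨q, hq⟩, n⟩ := qn
        have h1 : π (s q * (n : G)) = q := hmul q n
        refine Prod.ext (Subtype.ext ?_) (Subtype.ext ?_)
        · exact h1
        · show (s (π (s q * (n : G))))⁻¹ * (s q * (n : G)) = (n : G)
          rw [h1, inv_mul_cancel_left] }
  -- injection for the numerator
  let A := {xy : G × G // pElem p xy.1 ∧ pElem p xy.2 ∧ xy.1 * xy.2 = xy.2 * xy.1}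
  let B := {xy : (G ⧸ N) × (G ⧸ N) // pElem p xy.1 ∧ pElem p xy.2 ∧ xy.1 * xy.2 = xy.2 * xy.1}
  let f : A → B × N × N := fun a =>
    (⟨(π a.1.1, π a.1.2), hmap _ a.2.1, hmap _ a.2.2.1, by
        show π a.1.1 * π a.1.2 = π a.1.2 * π a.1.1
        rw [← map_mul, a.2.2.2, map_mul]⟩,
     ⟨(s (π a.1.1))⁻¹ * a.1.1, hNmem _⟩, ⟨(s (π a.1.2))⁻¹ * a.1.2, hNmem _⟩)
  have hfinj : Function.Injective f := by
    rintro ⟨⟨x1, x2⟩, hx⟩ ⟨⟨y1, y2⟩, hy⟩ h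
    have h1 : π x1 = π y1 := congrArg (fun z : B × N × N => z.1.1.1) h
    have h2 : π x2 = π y2 := congrArg (fun z : B × N × N => z.1.1.2) h
    have h3 : (s (π x1))⁻¹ * x1 = (s (π y1))⁻¹ * y1 :=
      congrArg (fun z : B × N × N => (z.2.1 : G)) h
    have h4 : (s (π x2))⁻¹ * x2 = (s (π y2))⁻¹ * y2 :=
      congrArg (fun z : B × N × N => (z.2.2 : G)) h
    have e1 : x1 = y1 := by
      calc x1 = s (π x1) * ((s (π x1))⁻¹ * x1) := by rw [mul_inv_cancel_left]
        _ = s (π y1) * ((s (π y1))⁻¹ * y1) := by rw [h3, h1]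
        _ = y1 := by rw [mul_inv_cancel_left]
    have e2 : x2 = y2 := by
      calc x2 = s (π x2) * ((s (π x2))⁻¹ * x2) := by rw [mul_inv_cancel_left]
        _ = s (π y2) * ((s (π y2))⁻¹ * y2) := by rw [h4, h2]
        _ = y2 := by rw [mul_inv_cancel_left]
    simp [e1, e2]
  have hcardA : Nat.card A ≤ Nat.card B * (Nat.card N * Nat.card N) := by
    have := Nat.card_le_card_of_injective f hfinj
    simpa [Nat.card_prod, mul_assoc] using this
  have hcardden : Nat.card {x : G // pElem p x}
      = Nat.card {q : G ⧸ N // pElem p q} * Nat.card N := by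
    rw [Nat.card_congr e, Nat.card_prod]
  set a : ℕ := Nat.card A with ha
  set b : ℕ := Nat.card B with hb
  set n : ℕ := Nat.card N with hn
  set m : ℕ := Nat.card {q : G ⧸ N // pElem p q} with hm
  have hmpos : 0 < m := Nat.card_pos_iff.mpr ⟨⟨⟨1, pElem_one' p⟩⟩, inferInstance⟩
  have hnpos : 0 < n := Nat.card_pos
  show (a : ℚ) / (Nat.card {x : G // pElem p x} : ℚ) ^ 2 ≤ (b : ℚ) / (m : ℚ) ^ 2
  rw [hcardden]
  have hmQ : (0 : ℚ) < (m : ℚ) := by exact_mod_cast hmpos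
  have hnQ : (0 : ℚ) < (n : ℚ) := by exact_mod_cast hnpos
  have haQ : (a : ℚ) ≤ (b : ℚ) * (n * n) := by exact_mod_cast hcardA
  rw [div_le_div_iff₀ (by positivity) (by positivity)]
  push_cast
  nlinarith [sq_nonneg ((m : ℚ) * n), hmQ.le, hnQ.le, mul_pos hmQ hmQ]
end

section
/- Let G be a finite group, let p be a prime and let N be a central subgroup of G whose order is coprime to p. Then Pr_p(G) = Pr_p(G/N). -/
set_option linter.unusedSectionVars false

section Aux

variable {G : Type*} [Group G] [Finite G] {p : ℕ} {N : Subgroup G}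

lemma aux_orderOf_coprime (hN : (Nat.card N).Coprime p) {z : G} (hz : z ∈ N) (k : ℕ) :
    Nat.Coprime (p ^ k) (orderOf z) := by
  have hzd : orderOf z ∣ Nat.card N := by
    have := orderOf_dvd_natCard (⟨z, hz⟩ : N)
    rwa [Subgroup.orderOf_mk] at this
  exact Nat.Coprime.pow_left k ((Nat.Coprime.coprime_dvd_left hzd hN).symm)

/-- If `x` and `x*z` are `p`-elements with `z` central of `p'`-order, then `z = 1`. -/
lemma aux_central_eq_one (hNc : N ≤ Subgroup.center G) (hN : (Nat.card N).Coprime p)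
    {x z : G} (hx : pElem p x) (hz : z ∈ N) (hxz : pElem p (x * z)) : z = 1 := by
  obtain ⟨k, hk⟩ := hx
  obtain ⟨j, hj⟩ := hxz
  have hcomm : Commute x z := (Subgroup.mem_center_iff.mp (hNc hz) x)
  have hcop : Nat.Coprime (orderOf x) (orderOf z) := hk ▸ aux_orderOf_coprime hN hz k
  have horder := hcomm.orderOf_mul_eq_mul_orderOf_of_coprime hcop
  rw [hj, hk] at horder
  have h1 : orderOf z ∣ p ^ j := ⟨p ^ k, by rw [horder, mul_comm]⟩
  have h2 : Nat.Coprime (p ^ j) (orderOf z) := aux_orderOf_coprime hN hz j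
  have h3 : orderOf z ∣ 1 := h2 ▸ Nat.dvd_gcd h1 dvd_rfl
  exact orderOf_eq_one_iff.mp (Nat.dvd_one.mp h3)

lemma aux_pElem_map [N.Normal] (hp : p.Prime) {x : G} (hx : pElem p x) :
    pElem p (QuotientGroup.mk (s := N) x) := by
  obtain ⟨k, hk⟩ := hx
  have hd : orderOf (QuotientGroup.mk (s := N) x) ∣ p ^ k := by
    rw [← hk]; exact orderOf_map_dvd (QuotientGroup.mk' N) x
  obtain ⟨j, _, hj⟩ := (Nat.dvd_prime_pow hp).mp hd
  exact ⟨j, hj⟩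

lemma aux_inj [N.Normal] (hNc : N ≤ Subgroup.center G) (hN : (Nat.card N).Coprime p)
    {x y : G} (hx : pElem p x) (hy : pElem p y)
    (h : (QuotientGroup.mk x : G ⧸ N) = QuotientGroup.mk y) : x = y := by
  have hz : x⁻¹ * y ∈ N := QuotientGroup.eq.mp h
  have hxy : x * (x⁻¹ * y) = y := by group
  have h1 : x⁻¹ * y = 1 := aux_central_eq_one hNc hN hx hz (by rw [hxy]; exact hy)
  exact (inv_mul_eq_one.mp h1)

lemma aux_surj [N.Normal] (hp : p.Prime) (hN : (Nat.card N).Coprime p)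
    {q : G ⧸ N} (hq : pElem p q) :
    ∃ x : G, pElem p x ∧ (QuotientGroup.mk x : G ⧸ N) = q := by
  obtain ⟨g, rfl⟩ := QuotientGroup.mk_surjective q
  obtain ⟨k, hk⟩ := hq
  set n := Nat.card N with hn
  have hcop : n.Coprime (orderOf (QuotientGroup.mk (s := N) g)) := by
    rw [hk]; exact hN.pow_right k
  obtain ⟨m, hm⟩ := exists_pow_eq_self_of_coprime hcop
  refine ⟨g ^ (n * m), ?_, ?_⟩
  · have hgn : (g ^ p ^ k) ∈ N := by
      rw [← QuotientGroup.eq_one_iff, QuotientGroup.mk_pow, ← hk, pow_orderOf_eq_one]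
    have hord : (g ^ p ^ k) ^ n = 1 := by
      have := orderOf_dvd_natCard (⟨g ^ p ^ k, hgn⟩ : N)
      rw [Subgroup.orderOf_mk] at this
      exact orderOf_dvd_iff_pow_eq_one.mp this
    have hpow : (g ^ (n * m)) ^ p ^ k = 1 := by
      rw [← pow_mul]
      calc g ^ (n * m * p ^ k) = ((g ^ p ^ k) ^ n) ^ m := by
            rw [← pow_mul, ← pow_mul]; ring_nf
        _ = 1 := by rw [hord, one_pow]
    have hd : orderOf (g ^ (n * m)) ∣ p ^ k := orderOf_dvd_iff_pow_eq_one.mpr hpow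
    obtain ⟨j, _, hj⟩ := (Nat.dvd_prime_pow hp).mp hd
    exact ⟨j, hj⟩
  · rw [QuotientGroup.mk_pow, pow_mul]
    exact hm

lemma aux_comm [N.Normal] (hNc : N ≤ Subgroup.center G) (hN : (Nat.card N).Coprime p)
    {x y : G} (hx : pElem p x) (hy : pElem p y)
    (h : (QuotientGroup.mk x : G ⧸ N) * QuotientGroup.mk y
       = (QuotientGroup.mk y : G ⧸ N) * QuotientGroup.mk x) : x * y = y * x := by
  set z := x⁻¹ * (y⁻¹ * x * y) with hzdef
  have hzN : z ∈ N := by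
    rw [← QuotientGroup.eq_one_iff]
    have : (QuotientGroup.mk (s := N)) (x * y) = QuotientGroup.mk (y * x) := by
      simpa [QuotientGroup.mk_mul] using h
    have h2 : (y * x)⁻¹ * (x * y) ∈ N := QuotientGroup.eq.mp this.symm
    rw [QuotientGroup.eq_one_iff]
    have : z = (y * x)⁻¹ * (x * y) := by rw [hzdef]; group
    rw [this]; exact h2
  have hconj : x * z = y⁻¹ * x * y := by rw [hzdef]; group
  have hxz : pElem p (x * z) := by
    rw [hconj]
    obtain ⟨k, hk⟩ := hx
    refine ⟨k, ?_⟩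
    have : y⁻¹ * x * y = (MulAut.conj y⁻¹) x := by rw [MulAut.conj_apply, inv_inv]
    rw [this, MulEquiv.orderOf_eq, hk]
  have hz1 : z = 1 := aux_central_eq_one hNc hN hx hzN hxz
  have : y⁻¹ * x * y = x := by rw [← hconj, hz1, mul_one]
  calc x * y = y * (y⁻¹ * x * y) := by group
    _ = y * x := by rw [this]

end Aux

/-- If `N` is a central subgroup of `G` of order coprime to `p`, then `Pr_p(G) = Pr_p(G/N)`. -/
theorem lem_quop' (G : Type*) [Group G] [Finite G] (p : ℕ) (hp : p.Prime)
    (N : Subgroup G) [N.Normal] (hNc : N ≤ Subgroup.center G)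
    (hN : (Nat.card N).Coprime p) :
    prP G p = prP (G ⧸ N) p := by
  have e1 : {x : G // pElem p x} ≃ {x : G ⧸ N // pElem p x} := by
    refine Equiv.ofBijective (fun x => ⟨QuotientGroup.mk x.1, aux_pElem_map hp x.2⟩) ⟨?_, ?_⟩
    · rintro ⟨x, hx⟩ ⟨y, hy⟩ h
      exact Subtype.ext (aux_inj hNc hN hx hy (congrArg Subtype.val h))
    · rintro ⟨q, hq⟩
      obtain ⟨x, hx, hxq⟩ := aux_surj hp hN hq
      exact ⟨⟨x, hx⟩, Subtype.ext hxq⟩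
  have e2 : {xy : G × G // pElem p xy.1 ∧ pElem p xy.2 ∧ xy.1 * xy.2 = xy.2 * xy.1}
      ≃ {xy : (G ⧸ N) × (G ⧸ N) // pElem p xy.1 ∧ pElem p xy.2 ∧ xy.1 * xy.2 = xy.2 * xy.1} := by
    refine Equiv.ofBijective (fun z =>
      ⟨(QuotientGroup.mk z.1.1, QuotientGroup.mk z.1.2),
        aux_pElem_map hp z.2.1, aux_pElem_map hp z.2.2.1, ?_⟩) ⟨?_, ?_⟩
    · show (QuotientGroup.mk z.1.1 : G ⧸ N) * QuotientGroup.mk z.1.2 = _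
      rw [← QuotientGroup.mk_mul, ← QuotientGroup.mk_mul, z.2.2.2]
    · rintro ⟨⟨x, y⟩, hx, hy, hxy⟩ ⟨⟨x', y'⟩, hx', hy', hxy'⟩ h
      have h' := congrArg Subtype.val h
      simp only [Prod.mk.injEq] at h'
      exact Subtype.ext (Prod.ext (aux_inj hNc hN hx hx' h'.1) (aux_inj hNc hN hy hy' h'.2))
    · rintro ⟨⟨a, b⟩, ha, hb, hab⟩
      obtain ⟨x, hx, hxa⟩ := aux_surj hp hN ha
      obtain ⟨y, hy, hyb⟩ := aux_surj hp hN hb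
      refine ⟨⟨(x, y), hx, hy, ?_⟩, ?_⟩
      · exact aux_comm hNc hN hx hy (by rw [hxa, hyb]; exact hab)
      · exact Subtype.ext (Prod.ext hxa hyb)
  rw [prP, prP, Nat.card_congr e1, Nat.card_congr e2]
end

section
/- Let G be a finite group, let x, y ∈ G and let K be a subgroup of G normalized by both x and y. If the cosets Kx and Ky are equal and |K| is coprime to o(x)·o(y) (the product of the orders of x and y), then x and y are K-conjugate: there exists k ∈ K with k⁻¹ x k = y. -/
open Pointwise

/-- If `K ≤ G` is normalized by `x` and `y`, the cosets `Kx` and `Ky` coincide, and `|K|` is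
coprime to `o(x)·o(y)`, then `x` and `y` are `K`-conjugate. -/
theorem lem_elem (G : Type*) [Group G] [Finite G] (x y : G) (K : Subgroup G)
    (hx : x ∈ Subgroup.normalizer (K : Set G)) (hy : y ∈ Subgroup.normalizer (K : Set G))
    (hcoset : (K : Set G) * ({x} : Set G) = (K : Set G) * ({y} : Set G))
    (hcop : (Nat.card K).Coprime (orderOf x * orderOf y)) :
    ∃ k ∈ K, k⁻¹ * x * k = y := by
  classical
  have : Fintype G := Fintype.ofFinite G
  set n := orderOf x with hndef
  set M := Nat.card K with hMdef
  have hMn : M.Coprime n := hcop.coprime_dvd_right (dvd_mul_right _ _)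
  have hMy : M.Coprime (orderOf y) := hcop.coprime_dvd_right (dvd_mul_left _ _)
  have hconj : ∀ g ∈ Subgroup.normalizer (K : Set G), ∀ c ∈ K, g * c * g⁻¹ ∈ K :=
    fun g hg c hc => (Subgroup.mem_normalizer_iff.mp hg c).mp hc
  -- y ∈ K x
  obtain ⟨c0, hc0K, hc0⟩ : ∃ c ∈ K, y = c * x := by
    have hmem : y ∈ (K : Set G) * ({x} : Set G) := by
      rw [hcoset]
      exact ⟨1, K.one_mem, y, rfl, one_mul y⟩
    obtain ⟨c, hc, z, hz, hzy⟩ := hmem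
    refine ⟨c, hc, ?_⟩
    simp only [Set.mem_singleton_iff] at hz
    rw [← hzy, hz]
  have hxn : x ^ n = 1 := pow_orderOf_eq_one x
  have hKpow : ∀ c ∈ K, c ^ M = 1 := by
    intro c hc
    have h1 : (⟨c, hc⟩ : K) ^ M = 1 := pow_card_eq_one'
    simpa using congrArg Subtype.val h1
  -- powers of y stay in the expected coset
  have hyj : ∀ j : ℕ, ∃ d ∈ K, y ^ j = d * x ^ j := by
    intro j
    induction j with
    | zero => exact ⟨1, K.one_mem, by simp⟩
    | succ j ih =>
      obtain ⟨d, hd, hdj⟩ := ih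
      refine ⟨d * (x ^ j * c0 * (x ^ j)⁻¹),
        K.mul_mem hd (hconj _ (Subgroup.pow_mem _ hx j) _ hc0K), ?_⟩
      rw [pow_succ, hdj, hc0]
      group
  have hyn : y ^ n = 1 := by
    obtain ⟨d, hd, hdn⟩ := hyj n
    rw [hxn, mul_one] at hdn
    have h1 : orderOf (y ^ n) ∣ M :=
      orderOf_dvd_iff_pow_eq_one.mpr (by rw [hdn]; exact hKpow d hd)
    have h2 : orderOf (y ^ n) ∣ orderOf y :=
      orderOf_dvd_iff_pow_eq_one.mpr
        (by rw [← pow_mul, mul_comm, pow_mul, pow_orderOf_eq_one, one_pow])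
    have h3 : orderOf (y ^ n) ∣ 1 := by
      rw [← hMy]; exact Nat.dvd_gcd h1 h2
    rw [orderOf_eq_one_iff.mp (Nat.dvd_one.mp h3)]
  by_cases hn1 : n = 1
  · -- n = 1 : x = 1 and y = 1
    have hx1 : x = 1 := orderOf_eq_one_iff.mp hn1
    have hy1 : y = 1 := by rw [← pow_one y, ← hn1]; exact hyn
    exact ⟨1, K.one_mem, by simp [hx1, hy1]⟩
  -- main case : 1 < n
  have hn2 : 1 < n := by have h0 : 0 < n := orderOf_pos x; omega
  obtain ⟨s, -, hs⟩ := Nat.exists_mul_mod_eq_one_of_coprime hMn hn2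
  set e := M * s with hedef
  set t := e / n with htdef
  have he : e = n * t + 1 := by
    conv_lhs => rw [← Nat.div_add_mod e n]
    rw [hs]
  have hxe : x ^ e = x := by rw [he, pow_succ, pow_mul, hxn, one_pow, one_mul]
  have hye : y ^ e = y := by rw [he, pow_succ, pow_mul, hyn, one_pow, one_mul]
  have hce : ∀ c ∈ K, c ^ e = 1 := by
    intro c hc
    rw [hedef, pow_mul, hKpow c hc, one_pow]
  -- key power computation
  have hkey : ∀ (k c : G), c ∈ K → x * c = c * x → (k * x * c * k⁻¹) ^ e = k * x * k⁻¹ := by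
    intro k c hc hcomm
    have h1 : (k * (x * c) * k⁻¹) ^ e = k * (x * c) ^ e * k⁻¹ := conj_pow
    have h2 : (x * c) ^ e = x := by
      rw [(Commute.mul_pow hcomm e : (x * c) ^ e = x ^ e * c ^ e), hxe, hce c hc, mul_one]
    rw [← mul_assoc] at h1
    rw [h1, h2]
  set L : Subgroup G := Subgroup.centralizer {x} ⊓ K with hLdef
  have hLcomm : ∀ d : L, x * (d : G) = (d : G) * x := by
    intro d
    exact Subgroup.mem_centralizer_iff.mp (d.2.1) x rfl
  have hLK : ∀ d : L, (d : G) ∈ K := fun d => d.2.2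
  set F : K × L → G := fun p => (p.1 : G) * x * (p.2 : G) * (p.1 : G)⁻¹ with hFdef
  set sF : Finset G := Finset.univ.image (fun k : K => (k : G) * x) with hsFdef
  set T : Finset G := Finset.univ.image F with hTdef
  have hsF_card : sF.card = Nat.card K := by
    rw [hsFdef, Finset.card_image_of_injective _
      (fun a b hab => Subtype.ext (mul_right_cancel hab)), Finset.card_univ,
      Nat.card_eq_fintype_card]
  have hTsub : T ⊆ sF := by
    intro g hg
    obtain ⟨p, _, rfl⟩ := Finset.mem_image.mp hg
    refine Finset.mem_image.mpr ⟨⟨(p.1 : G) * (x * ((p.2 : G) * (p.1 : G)⁻¹) * x⁻¹),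
      K.mul_mem p.1.2 (hconj x hx _ (K.mul_mem (hLK p.2) (K.inv_mem p.1.2)))⟩,
      Finset.mem_univ _, ?_⟩
    show (p.1 : G) * (x * ((p.2 : G) * (p.1 : G)⁻¹) * x⁻¹) * x = F p
    rw [hFdef]
    group
  -- fiber bound
  have hfiber : ∀ b ∈ T, (Finset.univ.filter (fun p => F p = b)).card ≤ Nat.card L := by
    intro b hb
    obtain ⟨p0, _, hp0⟩ := Finset.mem_image.mp hb
    have hcard2 : (Finset.univ.image (fun d : L => (p0.1 : G) * (d : G))).card = Nat.card L := by
      rw [Finset.card_image_of_injective _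
        (fun a b hab => Subtype.ext (mul_left_cancel hab)), Finset.card_univ,
        Nat.card_eq_fintype_card]
    rw [← hcard2]
    apply Finset.card_le_card_of_injOn (fun p => (p.1 : G))
    · intro p hp
      have hpb : F p = b := (Finset.mem_filter.mp hp).2
      -- take e-th powers to see that p.1 and p0.1 conjugate x the same way
      have h1 : (p.1 : G) * x * (p.1 : G)⁻¹ = (p0.1 : G) * x * (p0.1 : G)⁻¹ := by
        have e1 : (F p) ^ e = (p.1 : G) * x * (p.1 : G)⁻¹ :=
          hkey _ _ (hLK p.2) (hLcomm p.2)
        have e2 : (F p0) ^ e = (p0.1 : G) * x * (p0.1 : G)⁻¹ :=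
          hkey _ _ (hLK p0.2) (hLcomm p0.2)
        rw [← e1, ← e2, hpb, hp0]
      have hd1 : ((p0.1 : G)⁻¹ * (p.1 : G)) ∈ Subgroup.centralizer ({x} : Set G) := by
        refine Subgroup.mem_centralizer_iff.mpr ?_
        intro g hg
        rw [Set.mem_singleton_iff] at hg
        rw [hg]
        calc x * ((p0.1 : G)⁻¹ * (p.1 : G))
            = (p0.1 : G)⁻¹ * ((p0.1 : G) * x * (p0.1 : G)⁻¹) * (p.1 : G) := by group
          _ = (p0.1 : G)⁻¹ * ((p.1 : G) * x * (p.1 : G)⁻¹) * (p.1 : G) := by rw [h1]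
          _ = ((p0.1 : G)⁻¹ * (p.1 : G)) * x := by group
      have hd2 : ((p0.1 : G)⁻¹ * (p.1 : G)) ∈ K := K.mul_mem (K.inv_mem p0.1.2) p.1.2
      refine Finset.mem_image.mpr ⟨⟨(p0.1 : G)⁻¹ * (p.1 : G), ⟨hd1, hd2⟩⟩, Finset.mem_univ _, ?_⟩
      show (p0.1 : G) * ((p0.1 : G)⁻¹ * (p.1 : G)) = (p.1 : G)
      group
    · intro p hp q hq hpq
      have hpb : F p = b := (Finset.mem_filter.mp (Finset.mem_coe.mp hp)).2
      have hqb : F q = b := (Finset.mem_filter.mp (Finset.mem_coe.mp hq)).2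
      have h1 : (p.1 : G) = (q.1 : G) := hpq
      have h11 : p.1 = q.1 := Subtype.ext h1
      have h2 : (p.2 : G) = (q.2 : G) := by
        have h3 : (p.1 : G) * x * (p.2 : G) * (p.1 : G)⁻¹ =
            (q.1 : G) * x * (q.2 : G) * (q.1 : G)⁻¹ := by
          rw [show ((p.1 : G) * x * (p.2 : G) * (p.1 : G)⁻¹) = F p from rfl,
            show ((q.1 : G) * x * (q.2 : G) * (q.1 : G)⁻¹) = F q from rfl, hpb, hqb]
        rw [h1] at h3
        exact mul_left_cancel (mul_right_cancel h3)
      exact Prod.ext h11 (Subtype.ext h2)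
  -- counting
  have h1 : (Finset.univ : Finset (K × L)).card =
      ∑ b ∈ T, (Finset.univ.filter (fun p => F p = b)).card :=
    Finset.card_eq_sum_card_fiberwise (fun p _ => Finset.mem_image_of_mem F (Finset.mem_univ p))
  have hcount : Nat.card K * Nat.card L ≤ T.card * Nat.card L := by
    calc Nat.card K * Nat.card L
        = (Finset.univ : Finset (K × L)).card := by
          simp [Finset.card_univ, Nat.card_eq_fintype_card]
      _ = ∑ b ∈ T, (Finset.univ.filter (fun p => F p = b)).card := h1
      _ ≤ ∑ _b ∈ T, Nat.card L := Finset.sum_le_sum hfiber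
      _ = T.card * Nat.card L := by rw [Finset.sum_const, smul_eq_mul]
  have hTcard : Nat.card K ≤ T.card :=
    Nat.le_of_mul_le_mul_right hcount Nat.card_pos
  have hTeq : sF = T := (Finset.eq_of_subset_of_card_le hTsub (by rw [hsF_card]; exact hTcard)).symm
  have hy_mem : y ∈ T := by
    rw [← hTeq]
    exact Finset.mem_image.mpr ⟨⟨c0, hc0K⟩, Finset.mem_univ _, by rw [← hc0]⟩
  obtain ⟨p, _, hp⟩ := Finset.mem_image.mp hy_mem
  have e1 : (F p) ^ e = (p.1 : G) * x * (p.1 : G)⁻¹ :=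
    hkey _ _ (hLK p.2) (hLcomm p.2)
  have hyconj : (p.1 : G) * x * (p.1 : G)⁻¹ = y := by
    rw [← e1, hp, hye]
  refine ⟨(p.1 : G)⁻¹, K.inv_mem p.1.2, ?_⟩
  rw [inv_inv]
  exact hyconj
end

section
/- Let G be a finite group, let p be a prime and let x be a p-element of G that is not contained in any normal p-subgroup of G. Let D = {y ∈ G : the cyclic subgroup ⟨y⟩ is G-conjugate to ⟨x⟩}. Then |D| ≥ p^2 - 1. -/
open Pointwise MulAction

section Aux

variable {G : Type*} [Group G]

lemma conjSmul_eq (g : G) (H : Subgroup G) :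
    ConjAct.toConjAct g • H = Subgroup.map (MulAut.conj g).toMonoidHom H := by
  ext z
  rw [Subgroup.mem_pointwise_smul_iff_inv_smul_mem]
  simp only [← ConjAct.toConjAct_inv, ConjAct.toConjAct_smul, Subgroup.mem_map,
    MulEquiv.toMonoidHom_eq_coe, MonoidHom.coe_coe, MulAut.conj_apply, inv_inv]
  constructor
  · intro h; exact ⟨_, h, by group⟩
  · rintro ⟨w, hw, rfl⟩; group; simpa [mul_assoc] using hw

lemma isCyclic_zpowers (x : G) : IsCyclic (Subgroup.zpowers x) := by
  refine ⟨⟨⟨x, Subgroup.mem_zpowers x⟩, ?_⟩⟩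
  rintro ⟨a, m, rfl⟩
  exact ⟨m, by ext; simp⟩

lemma orderOf_conj' (g x : G) : orderOf (g * x * g⁻¹) = orderOf x := by
  have h := orderOf_injective (MulAut.conj g).toMonoidHom (MulAut.conj g).injective x
  simpa [MulAut.conj_apply] using h

/-- join of a finite family of `p`-subgroups, all `≤ K` and all normalized by `K`,
is a `p`-group. -/
lemma sup_pgroup (p : ℕ) (K : Subgroup G) (s : Finset (Subgroup G))
    (h : ∀ M ∈ s, IsPGroup p M ∧ M ≤ K ∧ K ≤ Subgroup.normalizer (M : Set G)) :
    IsPGroup p (s.sup id : Subgroup G) ∧ s.sup id ≤ K := by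
  classical
  induction s using Finset.induction_on with
  | empty => rw [Finset.sup_empty]; exact ⟨IsPGroup.of_bot, bot_le⟩
  | @insert M s hM ih =>
      obtain ⟨hs, hsle⟩ := ih (fun N hN => h N (Finset.mem_insert_of_mem hN))
      obtain ⟨hMp, hMle, hMnorm⟩ := h M (Finset.mem_insert_self M s)
      rw [Finset.sup_insert]
      exact ⟨IsPGroup.to_sup_of_normal_left' hMp hs (hsle.trans hMnorm),
        sup_le hMle hsle⟩

end Aux

/-- Lemma 3.5: if `x` is a `p`-element of `G` lying in no normal `p`-subgroup, then the set of
elements `y` with `⟨y⟩` conjugate to `⟨x⟩` has size at least `p² - 1`. -/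
theorem lem_classes (G : Type*) [Group G] [Finite G] (p : ℕ) (hp : p.Prime)
    (x : G) (hx : pElem p x)
    (hxO : ∀ N : Subgroup G, N.Normal → IsPGroup p N → x ∉ N) :
    p ^ 2 - 1 ≤ Nat.card {y : G // ∃ g : G,
      Subgroup.map (MulAut.conj g).toMonoidHom (Subgroup.zpowers x) = Subgroup.zpowers y} := by
  classical
  cases nonempty_fintype G
  haveI : Fact p.Prime := ⟨hp⟩
  obtain ⟨k, hk⟩ := hx
  have hx1 : x ≠ 1 := by
    intro h
    exact hxO ⊥ inferInstance IsPGroup.of_bot (by simp [h])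
  have hk1 : 1 ≤ k := by
    by_contra h
    push_neg at h
    interval_cases k
    · exact hx1 (orderOf_eq_one_iff.mp (by simpa using hk))
  set C : G → Subgroup G :=
    fun g => Subgroup.map (MulAut.conj g).toMonoidHom (Subgroup.zpowers x) with hCdef
  have hCz : ∀ g, C g = Subgroup.zpowers (g * x * g⁻¹) := by
    intro g
    simp only [hCdef]
    rw [MonoidHom.map_zpowers]
    congr 1
  have hC1 : C 1 = Subgroup.zpowers x := by rw [hCz]; simp
  have hCsmul : ∀ a g, ConjAct.toConjAct a • C g = C (a * g) := by
    intro a g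
    rw [conjSmul_eq, hCz, hCz, MonoidHom.map_zpowers]
    congr 1
    simp only [MulEquiv.toMonoidHom_eq_coe, MonoidHom.coe_coe, MulAut.conj_apply]
    group
  have hcard : ∀ g, Nat.card (C g) = p ^ k := by
    intro g
    rw [hCz, Nat.card_zpowers, orderOf_conj', hk]
  -- the finsets
  set Dfin : Finset G :=
    Finset.univ.filter (fun y => ∃ g : G, C g = Subgroup.zpowers y) with hDdef
  set Sfin : Finset (Subgroup G) := Finset.univ.image C with hSdef
  have himg : Dfin.image (fun y => Subgroup.zpowers y) = Sfin := by
    apply Finset.ext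
    intro B
    simp only [Finset.mem_image, hDdef, hSdef, Finset.mem_filter, Finset.mem_univ, true_and]
    constructor
    · rintro ⟨y, ⟨g, hg⟩, rfl⟩; exact ⟨g, hg⟩
    · rintro ⟨g, rfl⟩
      exact ⟨g * x * g⁻¹, ⟨g, (hCz g).trans rfl⟩, (hCz g).symm⟩
  -- fibers have at least p - 1 elements
  have hfiber : ∀ B ∈ Sfin, p - 1 ≤ (Dfin.filter (fun y => Subgroup.zpowers y = B)).card := by
    intro B hB
    simp only [hSdef, Finset.mem_image, Finset.mem_univ, true_and] at hB
    obtain ⟨g, rfl⟩ := hB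
    haveI : IsCyclic (C g) := by rw [hCz]; exact isCyclic_zpowers _
    have hcardB : Fintype.card (C g) = p ^ k := by
      rw [← Nat.card_eq_fintype_card]; exact hcard g
    have htot := IsCyclic.card_orderOf_eq_totient (α := C g) (d := p ^ k)
      (by rw [hcardB])
    -- elements of C g of order p ^ k inject into the fiber
    have hinj : ∀ b ∈ Finset.univ.filter (fun b : C g => orderOf b = p ^ k),
        (b : G) ∈ Dfin.filter (fun y => Subgroup.zpowers y = C g) := by
      intro b hb
      simp only [Finset.mem_filter, Finset.mem_univ, true_and] at hb
      have hble : Subgroup.zpowers (b : G) ≤ C g := by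
        rw [Subgroup.zpowers_le]; exact b.2
      have hbeq : Subgroup.zpowers (b : G) = C g := by
        apply Subgroup.eq_of_le_of_card_ge hble
        rw [Nat.card_zpowers, Subgroup.orderOf_coe, hb, hcard g]
      refine Finset.mem_filter.mpr ⟨?_, hbeq⟩
      simp only [hDdef, Finset.mem_filter, Finset.mem_univ, true_and]
      exact ⟨g, hbeq.symm⟩
    calc p - 1 ≤ (p ^ k).totient := by
          rw [Nat.totient_prime_pow hp hk1]
          exact Nat.le_mul_of_pos_left _ (pow_pos hp.pos _)
      _ = (Finset.univ.filter (fun b : C g => orderOf b = p ^ k)).card := htot.symm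
      _ ≤ (Dfin.filter (fun y => Subgroup.zpowers y = C g)).card := by
          exact Finset.card_le_card_of_injOn (fun b : C g => (b : G)) hinj
            (fun a _ b _ hab => Subtype.ext hab)
  -- number of conjugates is at least p + 1
  have hS : p + 1 ≤ Sfin.card := by
    by_contra hlt
    push_neg at hlt
    -- show all conjugates are fixed by conjugation by x
    have hfix : ∀ g, C (x * g) = C g := by
      intro g
      by_contra hne
      -- p-group acting
      set P : Subgroup (ConjAct G) := Subgroup.zpowers (ConjAct.toConjAct x) with hPdef
      have ho : orderOf (ConjAct.toConjAct x) = p ^ k := by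
        rw [← hk]
        simpa using orderOf_injective ConjAct.toConjAct.toMonoidHom
          ConjAct.toConjAct.injective x
      have hPp : IsPGroup p P :=
        IsPGroup.of_card (n := k) (by rw [Nat.card_zpowers, ho])
      haveI : Finite (orbit P (C g)) := Set.Finite.to_subtype (Set.toFinite _)
      obtain ⟨n, hn⟩ := hPp.card_orbit (C g)
      -- the orbit is not a singleton
      have hnotfix : C g ∉ fixedPoints P (Subgroup G) := by
        intro hfp
        apply hne
        have := hfp (⟨ConjAct.toConjAct x, Subgroup.mem_zpowers _⟩ : P)
        rwa [Subgroup.mk_smul, hCsmul] at this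
      have hn1 : Nat.card (orbit P (C g)) ≠ 1 := by
        intro h1
        exact hnotfix (mem_fixedPoints_iff_card_orbit_eq_one.mpr
          (by rw [← Nat.card_eq_fintype_card]; exact h1))
      have hpn : p ≤ Nat.card (orbit P (C g)) := by
        rcases Nat.eq_zero_or_pos n with rfl | hn0
        · exact absurd (by simpa using hn) hn1
        · calc p = p ^ 1 := (pow_one p).symm
            _ ≤ p ^ n := Nat.pow_le_pow_right hp.pos hn0
            _ = _ := hn.symm
      -- the orbit lies inside Sfin, and zpowers x is not in the orbit
      have horbsub : orbit P (C g) ⊆ ↑Sfin := by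
        rintro B ⟨⟨a, ha⟩, rfl⟩
        obtain ⟨m, rfl⟩ := Subgroup.mem_zpowers_iff.mp ha
        show ((ConjAct.toConjAct x) ^ m • C g : Subgroup G) ∈ ↑Sfin
        rw [← map_zpow, hCsmul]
        simp [hSdef]
      have hxnot : Subgroup.zpowers x ∉ orbit P (C g) := by
        intro hmem
        have horb_eq : orbit P (Subgroup.zpowers x) = orbit P (C g) :=
          (orbit_eq_iff.mpr hmem)
        have hfixx : orbit P (Subgroup.zpowers x) = {Subgroup.zpowers x} := by
          apply Set.eq_singleton_iff_unique_mem.mpr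
          refine ⟨mem_orbit_self _, ?_⟩
          rintro B ⟨⟨a, ha⟩, rfl⟩
          obtain ⟨m, rfl⟩ := Subgroup.mem_zpowers_iff.mp ha
          show (ConjAct.toConjAct x) ^ m • Subgroup.zpowers x = Subgroup.zpowers x
          rw [← map_zpow, ← hC1, hCsmul, mul_one, hCz, hC1]
          congr 1
          group
        rw [horb_eq] at hfixx
        have : Nat.card (orbit P (C g)) = 1 := by rw [hfixx]; simp
        exact hn1 this
      -- contradiction with Sfin.card ≤ p
      have hsub : insert (Subgroup.zpowers x) (orbit P (C g)) ⊆ ↑Sfin := by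
        apply Set.insert_subset _ horbsub
        rw [← hC1]; simp [hSdef]
      have hcard2 : p + 1 ≤ (insert (Subgroup.zpowers x) (orbit P (C g))).ncard := by
        rw [Set.ncard_insert_of_notMem hxnot (Set.toFinite _)]
        have : Nat.card (orbit P (C g)) = (orbit P (C g)).ncard := Nat.card_coe_set_eq _
        omega
      have := Set.ncard_le_ncard hsub (Set.toFinite _)
      rw [Set.ncard_coe_finset] at this
      omega
    -- now the normal closure is a normal p-subgroup containing x : contradiction
    set K : Subgroup G := ⨆ g : G, C g with hKdef
    have hCmap : ∀ a g, Subgroup.map (MulAut.conj a).toMonoidHom (C g) = C (a * g) := by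
      intro a g
      rw [← conjSmul_eq, hCsmul]
    have hCleK : ∀ g, C g ≤ K := fun g => le_iSup C g
    have hxK : x ∈ K := hCleK 1 (hC1 ▸ Subgroup.mem_zpowers x)
    have hKnormal : K.Normal := by
      constructor
      intro n hn a
      have hmaple : Subgroup.map (MulAut.conj a).toMonoidHom K ≤ K := by
        rw [hKdef, Subgroup.map_iSup]
        exact iSup_le fun g => (hCmap a g).le.trans (hCleK (a * g))
      exact hmaple ⟨n, hn, rfl⟩
    -- each conjugate is normalized by K
    have hnorm : ∀ g, K ≤ Subgroup.normalizer (C g : Set G) := by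
      intro g
      rw [hKdef]
      apply iSup_le
      intro h
      rw [hCz h, Subgroup.zpowers_le]
      -- h * x * h⁻¹ normalizes C g
      have hfix2 : C (h * x * h⁻¹ * g) = C g := by
        have e1 : h * x * h⁻¹ * g = h * (x * (h⁻¹ * g)) := by group
        rw [e1, ← hCsmul, hfix, hCsmul]
        congr 1
        group
      rw [Subgroup.mem_normalizer_iff]
      intro z
      constructor
      · intro hz
        have : (h * x * h⁻¹) * z * (h * x * h⁻¹)⁻¹ ∈
            Subgroup.map (MulAut.conj (h * x * h⁻¹)).toMonoidHom (C g) := ⟨z, hz, rfl⟩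
        rwa [hCmap, hfix2] at this
      · intro hz
        rw [← hfix2, ← hCmap] at hz
        obtain ⟨w, hw, hwe⟩ := hz
        have : w = z := by
          have : (h * x * h⁻¹) * w * (h * x * h⁻¹)⁻¹
              = (h * x * h⁻¹) * z * (h * x * h⁻¹)⁻¹ := hwe
          exact mul_left_cancel (mul_right_cancel this)
        rwa [← this]
    have hCp : ∀ g, IsPGroup p (C g) := fun g => IsPGroup.of_card (hcard g)
    -- K is the sup of the finitely many conjugates
    have hKsup : (Finset.univ.image C).sup id = K := by
      apply le_antisymm
      · exact Finset.sup_le fun B hB => by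
          obtain ⟨g, _, rfl⟩ := Finset.mem_image.mp hB
          exact hCleK g
      · rw [hKdef]
        exact iSup_le fun g =>
          Finset.le_sup (f := id) (Finset.mem_image_of_mem C (Finset.mem_univ g))
    have hKp : IsPGroup p K := by
      rw [← hKsup]
      apply (sup_pgroup p K (Finset.univ.image C) ?_).1
      intro M hM
      obtain ⟨g, _, rfl⟩ := Finset.mem_image.mp hM
      exact ⟨hCp g, hCleK g, hnorm g⟩
    exact hxO K hKnormal hKp hxK
  -- combine
  have hmain : (p - 1) * Sfin.card ≤ Dfin.card := by
    rw [← himg]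
    exact Finset.mul_card_image_le_card Dfin (p - 1)
      (fun B hB => by rw [himg] at hB; exact hfiber B hB)
  have hcount : Nat.card {y : G // ∃ g : G,
      Subgroup.map (MulAut.conj g).toMonoidHom (Subgroup.zpowers x) = Subgroup.zpowers y}
      = Dfin.card := by
    rw [Nat.card_eq_fintype_card, Fintype.card_subtype]
  rw [hcount]
  calc p ^ 2 - 1 = p ^ 2 - 1 ^ 2 := by norm_num
    _ = (p + 1) * (p - 1) := Nat.sq_sub_sq p 1
    _ ≤ Sfin.card * (p - 1) := Nat.mul_le_mul_right _ hS
    _ = (p - 1) * Sfin.card := Nat.mul_comm _ _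
    _ ≤ Dfin.card := hmain
end

section
/- Let n ≥ 5, let p be an odd prime and let x be an element of the symmetric group S_n of order p. Then the proportion of p-elements of the alternating group A_n that commute with x is at most 1/p; that is, p · |{y ∈ A_n : y is a p-element and x*y = y*x}| ≤ |(A_n)_p|, where (A_n)_p is the set of p-elements of A_n. -/
open Equiv Equiv.Perm

section Generic
variable {G : Type*} [Group G] {p : ℕ}

lemma pElem_of_dvd (hp : p.Prime) {g : G} {k : ℕ} (h : orderOf g ∣ p ^ k) : pElem p g := by
  obtain ⟨j, -, hj⟩ := (Nat.dvd_prime_pow hp).mp h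
  exact ⟨j, hj⟩

lemma pElem_map {H : Type*} [Group H] (hp : p.Prime) (φ : G →* H) {g : G} (hg : pElem p g) :
    pElem p (φ g) := by
  obtain ⟨k, hk⟩ := hg
  exact pElem_of_dvd hp (hk ▸ orderOf_map_dvd φ g)

lemma one_pElem : pElem p (1 : G) := ⟨0, by simp⟩

lemma card_pElem_le_of_injhom {H : Type*} [Group H] [Finite H] (hp : p.Prime)
    (φ : G →* H) (hφ : Function.Injective φ) :
    Nat.card {g : G // pElem p g} ≤ Nat.card {h : H // pElem p h} := by
  apply Nat.card_le_card_of_injective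
    (fun g : {g : G // pElem p g} => (⟨φ g.1, pElem_map hp φ g.2⟩ : {h : H // pElem p h}))
  rintro ⟨g, _⟩ ⟨g', _⟩ h
  simp only [Subtype.mk.injEq] at h ⊢
  exact hφ h
lemma card_pElem_congr {H : Type*} [Group H] (e : G ≃* H) :
    Nat.card {g : G // pElem p g} = Nat.card {h : H // pElem p h} :=
  Nat.card_congr (Equiv.subtypeEquiv e.toEquiv (fun g => by
    unfold pElem
    rw [show e.toEquiv g = e.toMonoidHom g from rfl,
      orderOf_injective e.toMonoidHom e.injective]))

lemma card_pElem_le_of_hom {H : Type*} [Group H] [Finite G] [Finite H]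
    (hp : p.Prime) (φ : G →* H) :
    Nat.card {g : G // pElem p g} ≤
      Nat.card φ.ker * Nat.card {h : H // pElem p h} := by
  classical
  have hinj : Function.Injective (fun g : {g : G // pElem p g} =>
      ((⟨g.1 * (Function.invFun φ (φ g.1))⁻¹, by
          have : φ (Function.invFun φ (φ g.1)) = φ g.1 :=
            Function.invFun_eq ⟨g.1, rfl⟩
          simp [MonoidHom.mem_ker, this]⟩ : φ.ker),
        (⟨φ g.1, pElem_map hp φ g.2⟩ : {h : H // pElem p h}))) := by
    rintro ⟨g, hg⟩ ⟨g', hg'⟩ h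
    simp only [Prod.mk.injEq, Subtype.mk.injEq] at h
    obtain ⟨h1, h2⟩ := h
    have := h1
    rw [h2] at this
    ext
    exact mul_right_cancel this
  calc Nat.card {g : G // pElem p g} ≤
      Nat.card (φ.ker × {h : H // pElem p h}) := Nat.card_le_card_of_injective _ hinj
    _ = _ := Nat.card_prod _ _

end Generic

section Count
variable (p : ℕ)

/-- number of `p`-elements of `S_k` -/
noncomputable def tc (k : ℕ) : ℕ := Nat.card {y : Perm (Fin k) // pElem p y}

lemma tc_pos (k : ℕ) : 0 < tc p k :=
  @Nat.card_pos _ ⟨⟨1, one_pElem⟩⟩ _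

lemma tc_mono (hp : p.Prime) {a b : ℕ} (h : a ≤ b) : tc p a ≤ tc p b :=
  card_pElem_le_of_injhom hp (viaEmbeddingHom (Fin.castLEEmb h))
    (viaEmbeddingHom_injective _)


lemma tc_rec (hp : p.Prime) {k : ℕ} (hk : p ≤ k) :
    (k - 1).descFactorial (p - 1) * tc p (k - p) + tc p (k - 1) ≤ tc p k := by
  classical
  have hp2 : 2 ≤ p := hp.two_le
  have hk0 : 0 < k := by omega
  set z : Fin k := ⟨0, hk0⟩ with hz
  have cardST : Fintype.card {i : Fin k // i ≠ z} = k - 1 := by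
    have := Fintype.card_subtype_compl (fun i : Fin k => i = z)
    simp only [Fintype.card_subtype_eq, Fintype.card_fin] at this
    exact this
  set E := Fin (p - 1) ↪ {i : Fin k // i ≠ z} with hE
  set L : E → List (Fin k) := fun e => z :: List.ofFn (fun i => (e i).1) with hL
  have hlen : ∀ e : E, (L e).length = p := by
    intro e; simp only [hL, List.length_cons, List.length_ofFn]; omega
  have hnodup : ∀ e : E, (L e).Nodup := by
    intro e
    refine List.nodup_cons.mpr ⟨?_, ?_⟩
    · intro hmem
      rw [List.mem_ofFn] at hmem
      obtain ⟨i, hi⟩ := hmem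
      exact (e i).2 hi
    · exact List.nodup_ofFn.mpr (fun i j hij => e.injective (Subtype.ext hij))
  set G : E → Perm (Fin k) := fun e => (L e).formPerm with hG
  have hcyc : ∀ e : E, (G e).IsCycle := by
    intro e
    exact List.isCycle_formPerm (hnodup e) (by rw [hlen e]; omega)
  have hsupp : ∀ e : E, (G e).support = (L e).toFinset := by
    intro e
    apply List.support_formPerm_of_nodup _ (hnodup e)
    intro x hx
    have := hlen e
    rw [hx] at this
    simp at this; omega
  have hcardsupp : ∀ e : E, (G e).support.card = p := by
    intro e
    rw [hsupp e, List.toFinset_card_of_nodup (hnodup e), hlen e]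
  have horder : ∀ e : E, orderOf (G e) = p := by
    intro e
    rw [(hcyc e).orderOf, hcardsupp e]
  have hzsupp : ∀ e : E, z ∈ (G e).support := by
    intro e
    rw [hsupp e]
    simp [hL]
  -- complement embedding
  have hscard : ∀ e : E, ((G e).support)ᶜ.card = k - p := by
    intro e
    rw [Finset.card_compl, hcardsupp e, Fintype.card_fin]
  set I : ∀ e : E, Fin (k - p) ↪ Fin k :=
    fun e => (((G e).support)ᶜ.orderEmbOfFin (hscard e)).toEmbedding with hI
  have hrange : ∀ e : E, Set.range (I e) = ↑(((G e).support)ᶜ) := by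
    intro e
    exact Finset.range_orderEmbOfFin _ _
  have hfix : ∀ (e : E) (ρ : Perm (Fin (k - p))) (a : Fin k),
      a ∈ (G e).support → ρ.viaEmbedding (I e) a = a := by
    intro e ρ a ha
    apply viaEmbedding_apply_of_notMem
    rw [hrange e]
    simp [ha]
  have hdisj : ∀ (e : E) (ρ : Perm (Fin (k - p))), Perm.Disjoint (G e) (ρ.viaEmbedding (I e)) := by
    intro e ρ a
    by_cases ha : a ∈ (G e).support
    · exact Or.inr (hfix e ρ a ha)
    · exact Or.inl (notMem_support.mp ha)
  -- the first map
  set Θ₁ : E × {ρ : Perm (Fin (k - p)) // pElem p ρ} → Perm (Fin k) :=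
    fun w => G w.1 * (w.2.1.viaEmbedding (I w.1)) with hΘ₁
  have hΘ₁p : ∀ w, pElem p (Θ₁ w) := by
    rintro ⟨e, ρ, j, hρ⟩
    have hcomm := (hdisj e ρ).commute
    have h1 : orderOf (Θ₁ (e, ⟨ρ, j, hρ⟩)) ∣ p ^ (1 + j) := by
      have := hcomm.orderOf_mul_dvd_lcm
      refine dvd_trans this (dvd_trans (Nat.lcm_dvd_mul _ _) ?_)
      rw [horder e, show ρ.viaEmbedding (I e) = viaEmbeddingHom (I e) ρ from rfl,
        orderOf_injective (viaEmbeddingHom (I e)) (viaEmbeddingHom_injective _) ρ, hρ,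
        pow_add, pow_one]
    exact pElem_of_dvd hp h1
  -- powers at z
  have hpowz : ∀ (e : E) (ρ : {ρ : Perm (Fin (k - p)) // pElem p ρ}) (j : ℕ),
      (Θ₁ (e, ρ)) ^ j • z = (G e) ^ j • z := by
    intro e ρ j
    have hcomm := (hdisj e ρ.1).commute
    simp only [hΘ₁, hcomm.mul_pow, Perm.smul_def, Perm.mul_apply]
    congr 1
    have : (ρ.1 ^ j).viaEmbedding (I e) z = z := by
      apply viaEmbedding_apply_of_notMem
      rw [hrange e]
      simp [hzsupp e]
    rw [← this]
    congr 1
    exact (map_pow (viaEmbeddingHom (I e)) ρ.1 j).symm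
  have hGpow : ∀ (e : E) (i : Fin (p - 1)), (G e) ^ (i.1 + 1) • z = (e i).1 := by
    intro e i
    have h1 : ((L e).formPerm ^ (i.1 + 1)) z =
        (L e)[((i.1 + 1) % (L e).length)]'(Nat.mod_lt _ (by rw [hlen e]; omega)) := by
      exact List.formPerm_pow_apply_head z _ (hnodup e) (i.1 + 1)
    have hmod : (i.1 + 1) % (L e).length = i.1 + 1 := by
      rw [hlen e]; exact Nat.mod_eq_of_lt (by omega)
    simp only [Perm.smul_def, hG, h1]
    have : (L e)[((i.1+1) % (L e).length)]'(Nat.mod_lt _ (by rw [hlen e]; omega)) =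
        (L e)[(i.1+1)]'(by rw [hlen e]; omega) := by
      congr 1
    rw [this]
    simp [hL]
  -- z is moved by Θ₁ and fixed by Θ₂
  have hΘ₁z : ∀ w, Θ₁ w z ≠ z := by
    rintro ⟨e, ρ⟩
    have h1 : Θ₁ (e, ρ) z = G e z := by
      simp only [hΘ₁, Perm.mul_apply]
      rw [hfix e ρ.1 z (hzsupp e)]
    rw [h1]
    exact mem_support.mp (hzsupp e)
  -- the second map
  set I₀ : Fin (k - 1) ↪ Fin k :=
    ⟨fun i => ⟨i.1 + 1, by omega⟩, by
      intro a b hab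
      simp only [Fin.mk.injEq, Nat.add_right_cancel_iff] at hab
      exact Fin.ext hab⟩ with hI₀
  set Θ₂ : {ρ : Perm (Fin (k - 1)) // pElem p ρ} → Perm (Fin k) :=
    fun ρ => ρ.1.viaEmbedding I₀ with hΘ₂
  have hΘ₂p : ∀ ρ, pElem p (Θ₂ ρ) := by
    rintro ⟨ρ, j, hρ⟩
    refine ⟨j, ?_⟩
    rw [hΘ₂]
    show orderOf (ρ.viaEmbedding I₀) = p ^ j
    rw [show ρ.viaEmbedding I₀ = viaEmbeddingHom I₀ ρ from rfl,
      orderOf_injective (viaEmbeddingHom I₀) (viaEmbeddingHom_injective _) ρ]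
    exact hρ
  have hΘ₂z : ∀ ρ, Θ₂ ρ z = z := by
    intro ρ
    apply viaEmbedding_apply_of_notMem
    rintro ⟨i, hi⟩
    have : (I₀ i).1 = (0 : ℕ) := congrArg Fin.val hi
    simp [hI₀] at this
  -- the combined injection
  set Φ : (E × {ρ : Perm (Fin (k - p)) // pElem p ρ}) ⊕ {ρ : Perm (Fin (k - 1)) // pElem p ρ} →
      {y : Perm (Fin k) // pElem p y} :=
    fun w => Sum.elim (fun w => ⟨Θ₁ w, hΘ₁p w⟩) (fun ρ => ⟨Θ₂ ρ, hΘ₂p ρ⟩) w with hΦ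
  have hΦinj : Function.Injective Φ := by
    rintro (⟨e, ρ⟩ | ρ) (⟨e', ρ'⟩ | ρ') hw
    · simp only [hΦ, Sum.elim_inl, Subtype.mk.injEq] at hw
      -- recover e
      have he : e = e' := by
        apply DFunLike.ext
        intro i
        apply Subtype.ext
        rw [← hGpow e i, ← hGpow e' i, ← hpowz e ρ (i.1+1), ← hpowz e' ρ' (i.1+1), hw]
      subst he
      have hρρ' : ρ.1.viaEmbedding (I e) = ρ'.1.viaEmbedding (I e) := by
        have := hw
        rw [hΘ₁] at this
        simp only at this
        exact mul_left_cancel this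
      have : ρ.1 = ρ'.1 := viaEmbeddingHom_injective (I e) hρρ'
      exact congrArg Sum.inl (congrArg (Prod.mk e) (Subtype.ext this))
    · exfalso
      simp only [hΦ, Sum.elim_inl, Sum.elim_inr, Subtype.mk.injEq] at hw
      exact hΘ₁z (e, ρ) (by rw [hw]; exact hΘ₂z ρ')
    · exfalso
      simp only [hΦ, Sum.elim_inl, Sum.elim_inr, Subtype.mk.injEq] at hw
      exact hΘ₁z (e', ρ') (by rw [← hw]; exact hΘ₂z ρ)
    · simp only [hΦ, Sum.elim_inr, Subtype.mk.injEq] at hw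
      exact congrArg Sum.inr (Subtype.ext (viaEmbeddingHom_injective I₀ hw))
  have hcard := Nat.card_le_card_of_injective Φ hΦinj
  rw [Nat.card_sum, Nat.card_prod] at hcard
  have hcardE : Nat.card E = (k - 1).descFactorial (p - 1) := by
    show Nat.card (Fin (p - 1) ↪ {i : Fin k // i ≠ z}) = _
    rw [Nat.card_eq_fintype_card, Fintype.card_embedding_eq, cardST, Fintype.card_fin]
  rw [hcardE] at hcard
  exact hcard

end Count

-- numeric helpers
lemma desc_ge_pow : ∀ (a j : ℕ), (a + 1 - j) ^ j ≤ a.descFactorial j := by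
  intro a j
  induction j with
  | zero => simp
  | succ j ih =>
    rw [Nat.descFactorial_succ]
    have e1 : a + 1 - (j + 1) = a - j := by omega
    rw [e1, pow_succ, mul_comm]
    exact Nat.mul_le_mul (le_refl _)
      (le_trans (Nat.pow_le_pow_left (by omega) j) ih)

lemma desc_ge_mul (a j : ℕ) (hj : 1 ≤ j) : a * (a + 1 - j) ^ (j - 1) ≤ a.descFactorial j := by
  rcases Nat.eq_zero_or_pos a with rfl | ha
  · simp
  obtain ⟨b, rfl⟩ := Nat.exists_eq_add_of_le ha
  obtain ⟨i, rfl⟩ := Nat.exists_eq_add_of_le hj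
  simp only [Nat.add_comm 1 b, Nat.add_comm 1 i, Nat.succ_descFactorial_succ]
  apply Nat.mul_le_mul (le_refl _)
  have : b + 1 + 1 - (i + 1) = b + 1 - i := by omega
  rw [this, Nat.add_sub_cancel]
  exact desc_ge_pow b i

lemma two_pow_ge : ∀ s : ℕ, 3 ≤ s → s + 2 ≤ 2 ^ s := by
  intro s hs
  induction s with
  | zero => omega
  | succ s ih =>
    rcases Nat.lt_or_ge s 3 with h | h
    · interval_cases s <;> simp_all <;> omega
    · have := ih (by omega)
      rw [pow_succ]
      omega

lemma sq_le_fact : ∀ r : ℕ, 6 ≤ r → (r + 1) ^ 2 ≤ r.factorial := by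
  intro r hr
  induction r with
  | zero => omega
  | succ r ih =>
    rcases Nat.lt_or_ge r 6 with h | h
    · interval_cases r <;> first | omega | norm_num [Nat.factorial]
    · have h1 := ih (by omega)
      rw [Nat.factorial_succ]
      have h2 : (r + 1 + 1) ^ 2 ≤ (r + 1) * (r + 1) ^ 2 := by nlinarith
      exact le_trans h2 (Nat.mul_le_mul (le_refl _) h1)

section Main
variable (p : ℕ)

lemma base_ineq (hp : p.Prime) (hodd : Odd p) (f : ℕ) (h5 : 5 ≤ p + f) :
    p ^ 2 * tc p f ≤ tc p (p + f) := by
  have hp2 : 2 ≤ p := hp.two_le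
  have hp3 : 3 ≤ p := by
    obtain ⟨t, rfl⟩ := hodd
    omega
  have hrec := tc_rec p hp (show p ≤ p + f by omega)
  have hmono : tc p f ≤ tc p (p + f - 1) := tc_mono p hp (by omega)
  have hD : p ^ 2 ≤ (p + f - 1).descFactorial (p - 1) + 1 := by
    rcases Nat.eq_zero_or_pos f with rfl | hf
    · -- f = 0, p ≥ 5
      have hp5 : 5 ≤ p := by omega
      have : (p + 0 - 1).descFactorial (p - 1) = (p - 1).factorial := by
        simp only [Nat.add_zero]
        rw [show p - 1 = p - 1 from rfl]
        exact Nat.descFactorial_self (p - 1)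
      rw [this]
      rcases eq_or_lt_of_le hp5 with h5' | h5'
    -- p = 5 or p ≥ 7
      · subst h5'
        norm_num [Nat.factorial]
      · have hp7 : 7 ≤ p := by
          obtain ⟨t, rfl⟩ := hodd
          omega
        have := sq_le_fact (p - 1) (by omega)
        have e : p - 1 + 1 = p := by omega
        rw [e] at this
        omega
    · -- f ≥ 1
      rcases eq_or_lt_of_le hp3 with h3 | h5'
      · -- p = 3
        subst h3
        have hf2 : 2 ≤ f := by omega
        have : (3 + f - 1).descFactorial 2 = (f + 2) * (f + 1) := by
          have e : 3 + f - 1 = f + 2 := by omega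
          rw [e]
          simp [Nat.descFactorial_succ, Nat.descFactorial_zero]
          ring
        rw [this]
        nlinarith
      · -- p ≥ 5
        have hp5 : 5 ≤ p := by
          obtain ⟨t, rfl⟩ := hodd
          omega
        have h1 : (p + f - 1) * ((p + f - 1) + 1 - (p - 1)) ^ ((p - 1) - 1) ≤
            (p + f - 1).descFactorial (p - 1) := desc_ge_mul _ _ (by omega)
        have e1 : (p + f - 1) + 1 - (p - 1) = f + 1 := by omega
        rw [e1] at h1
        have h2 : p * 2 ^ (p - 2) ≤ (p + f - 1) * (f + 1) ^ (p - 1 - 1) := by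
          apply Nat.mul_le_mul (by omega)
          have : (2 : ℕ) ^ (p - 2) ≤ (f + 1) ^ (p - 2) := Nat.pow_le_pow_left (by omega) _
          have e2 : p - 1 - 1 = p - 2 := by omega
          rw [e2]
          exact this
        have h3 : p ^ 2 ≤ p * 2 ^ (p - 2) := by
          rw [pow_two]
          apply Nat.mul_le_mul (le_refl _)
          have := two_pow_ge (p - 2) (by omega)
          omega
        omega
  calc p ^ 2 * tc p f ≤ ((p + f - 1).descFactorial (p - 1) + 1) * tc p f :=
        Nat.mul_le_mul_right _ hD
    _ = (p + f - 1).descFactorial (p - 1) * tc p f + tc p f := by ring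
    _ ≤ (p + f - 1).descFactorial (p - 1) * tc p (p + f - p) + tc p (p + f - 1) := by
        have e : p + f - p = f := by omega
        rw [e]
        exact Nat.add_le_add (le_refl _) hmono
    _ ≤ tc p (p + f) := hrec

lemma main_ineq (hp : p.Prime) (hodd : Odd p) :
    ∀ m, 1 ≤ m → ∀ f, 5 ≤ p * m + f →
      p ^ (m + 1) * m.factorial * tc p f ≤ tc p (p * m + f) := by
  have hp2 : 2 ≤ p := hp.two_le
  have hp3 : 3 ≤ p := by obtain ⟨t, rfl⟩ := hodd; omega
  intro m hm
  induction m, hm using Nat.le_induction with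
  | base =>
    intro f h5
    have := base_ineq p hp hodd f (by omega)
    simpa [Nat.factorial] using this
  | succ m hm ih =>
    intro f h5
    rcases Nat.lt_or_ge (p * m + f) 5 with hlt | hge
    · -- special case: p = 3, m = 1, f ≤ 1
      have hpm : p ≤ p * m := Nat.le_mul_of_pos_right p (by omega)
      have hodd' : p % 2 = 1 := Nat.odd_iff.mp hodd
      have hp3' : p = 3 := by omega
      subst hp3'
      have hm1 : m = 1 := by omega
      have hf1 : f ≤ 1 := by omega
      subst hm1
      -- goal: 3^3 * 2 * tc 3 f ≤ tc 3 (6 + f)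
      have htcf : tc 3 f ≤ 1 := by
        have : tc 3 f ≤ Nat.card (Perm (Fin f)) :=
          Nat.card_le_card_of_injective Subtype.val Subtype.val_injective
        have e : Nat.card (Perm (Fin f)) = f.factorial := by
          rw [Nat.card_eq_fintype_card, Fintype.card_perm, Fintype.card_fin]
        rw [e] at this
        interval_cases f <;> simpa using this
      have h3 : 3 ≤ tc 3 3 := by
        have hrec := tc_rec 3 hp (show (3:ℕ) ≤ 3 from le_refl _)
        simp only [show (3:ℕ)-1 = 2 from rfl, show (3:ℕ)-3 = 0 from rfl,
          show (2:ℕ).descFactorial 2 = 2 from by decide] at hrec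
        have h0 := tc_pos 3 0
        have h2 := tc_pos 3 2
        omega
      have h6 : 60 ≤ tc 3 6 := by
        have hrec := tc_rec 3 hp (show (3:ℕ) ≤ 6 by omega)
        simp only [show (6:ℕ)-1 = 5 from rfl, show (6:ℕ)-3 = 3 from rfl, show (3:ℕ)-1 = 2 from rfl,
          show (5:ℕ).descFactorial 2 = 20 from by decide] at hrec
        have h5' := tc_pos 3 5
        have : (20 : ℕ) * 3 ≤ 20 * tc 3 3 := Nat.mul_le_mul_left _ h3
        omega
      have hmono : tc 3 6 ≤ tc 3 (3 * (1 + 1) + f) := tc_mono 3 hp (by omega)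
      calc (3:ℕ) ^ (1 + 1 + 1) * Nat.factorial (1 + 1) * tc 3 f
          ≤ 54 * 1 := by
            have : (3:ℕ) ^ (1+1+1) * Nat.factorial (1+1) = 54 := by decide
            rw [this]
            exact Nat.mul_le_mul_left _ htcf
        _ ≤ tc 3 (3 * (1 + 1) + f) := by omega
    · -- main step
      have hpm1 : p * (m + 1) = p * m + p := by ring
      have hrec := tc_rec p hp (show p ≤ p * (m + 1) + f by omega)
      have e1 : p * (m + 1) + f - p = p * m + f := by omega
      rw [e1] at hrec
      have hstep : p * (m + 1) ≤ (p * (m + 1) + f - 1).descFactorial (p - 1) := by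
        have h1 : ((p * (m+1) + f - 1) + 1 - (p-1)) ^ (p - 1) ≤
            (p * (m+1) + f - 1).descFactorial (p - 1) := desc_ge_pow _ _
        have e3 : (p * (m+1) + f - 1) + 1 - (p-1) = p * m + f + 1 := by omega
        rw [e3] at h1
        have h2 : (p * m + 1) ^ 2 ≤ (p * m + f + 1) ^ (p - 1) := by
          calc (p * m + 1) ^ 2 ≤ (p * m + f + 1) ^ 2 := Nat.pow_le_pow_left (by omega) 2
            _ ≤ (p * m + f + 1) ^ (p - 1) := Nat.pow_le_pow_right (by omega) (by omega)
        have hq : p ≤ p * m := Nat.le_mul_of_pos_right p (by omega)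
        have hsq : (p * m + 1) ^ 2 = (p * m) * (p * m) + 2 * (p * m) + 1 := by ring
        omega
      have ihf := ih f hge
      calc p ^ (m + 1 + 1) * Nat.factorial (m + 1) * tc p f
          = (p * (m + 1)) * (p ^ (m + 1) * Nat.factorial m * tc p f) := by
            rw [Nat.factorial_succ]
            ring
        _ ≤ (p * (m + 1)) * tc p (p * m + f) := Nat.mul_le_mul_left _ ihf
        _ ≤ (p * (m + 1) + f - 1).descFactorial (p - 1) * tc p (p * m + f) :=
            Nat.mul_le_mul_right _ hstep
        _ ≤ tc p (p * (m + 1) + f) := le_trans (Nat.le_add_right _ _) hrec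
end Main

section Cent
variable {p : ℕ}

/-- `Equiv.permCongr` as a `MulEquiv`. -/
def permMulCongr {α β : Type*} (e : α ≃ β) : Perm α ≃* Perm β :=
  { Equiv.permCongr e with
    map_mul' := fun f g => by
      ext b
      simp [Equiv.permCongr_apply] }

lemma pElem_coe {G : Type*} [Group G] {H : Subgroup G} (g : H) :
    pElem p (g : G) ↔ pElem p g := by
  unfold pElem
  rw [show (g : G) = H.subtype g from rfl, orderOf_injective H.subtype Subtype.coe_injective g]

lemma centralizer_bound {n : ℕ} (hp : p.Prime) (x : Perm (Fin n)) (hx : orderOf x = p) :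
    Nat.card {y : Perm (Fin n) // pElem p y ∧ x * y = y * x} ≤
      p ^ x.cycleFactorsFinset.card * (x.cycleFactorsFinset.card).factorial *
        tc p (Fintype.card {a : Fin n // x a = a}) := by
  classical
  set m := x.cycleFactorsFinset.card with hm
  -- each cycle factor is a cycle of order p
  have hcyc : ∀ c ∈ x.cycleFactorsFinset, c.IsCycle ∧ orderOf c = p := by
    intro c hc
    have h1 : c.IsCycle := (mem_cycleFactorsFinset_iff.mp hc).1
    have h2 : (Finset.card ∘ Equiv.Perm.support) c ∈ x.cycleType :=
      Multiset.mem_map_of_mem _ (Finset.mem_val.mpr hc)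
    obtain ⟨m', hm'⟩ := cycleType_prime_order (by rw [hx]; exact hp)
    rw [hx] at hm'
    rw [hm'] at h2
    have h3 := Multiset.eq_of_mem_replicate h2
    refine ⟨h1, ?_⟩
    rw [h1.orderOf]
    exact h3
  set Z := Subgroup.centralizer ({x} : Set (Perm (Fin n))) with hZ
  have hmemx : ∀ g : Z, (g : Perm (Fin n)) * x = x * (g : Perm (Fin n)) :=
    fun g => Subgroup.mem_centralizer_singleton_iff.mp g.2
  have e1 : {y : Perm (Fin n) // pElem p y ∧ x * y = y * x} ≃ {g : Z // pElem p g} :=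
    { toFun := fun y => ⟨⟨y.1, Subgroup.mem_centralizer_singleton_iff.mpr y.2.2.symm⟩,
        (pElem_coe _).mp y.2.1⟩
      invFun := fun g => ⟨(g.1 : Perm (Fin n)), (pElem_coe _).mpr g.2,
        ((hmemx g.1).symm : x * _ = _ * x)⟩
      left_inv := fun y => rfl
      right_inv := fun g => rfl }
  -- conjugation action on cycle factors
  have hconjmem : ∀ (g : Z) (c : Perm (Fin n)), c ∈ x.cycleFactorsFinset →
      (g : Perm (Fin n)) * c * (g : Perm (Fin n))⁻¹ ∈ x.cycleFactorsFinset := by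
    intro g c hc
    have hxg : (g : Perm (Fin n)) * x * (g : Perm (Fin n))⁻¹ = x := by
      rw [hmemx g]
      group
    have := (mem_cycleFactorsFinset_conj x (g : Perm (Fin n)) c).mpr hc
    rwa [hxg] at this
  set ψ₁ : Z →* Perm {c : Perm (Fin n) // c ∈ x.cycleFactorsFinset} :=
    MonoidHom.mk' (fun g =>
      { toFun := fun c => ⟨(g : Perm (Fin n)) * c.1 * (g : Perm (Fin n))⁻¹,
          hconjmem g c.1 c.2⟩
        invFun := fun c => ⟨(g : Perm (Fin n))⁻¹ * c.1 * (g : Perm (Fin n)),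
          by simpa using hconjmem g⁻¹ c.1 c.2⟩
        left_inv := fun c => by
          ext1
          simp only
          group
        right_inv := fun c => by
          ext1
          simp only
          group })
      (fun g h => by
        refine Equiv.ext fun c => Subtype.ext ?_
        show ((g * h : Z) : Perm (Fin n)) * c.1 * ((g * h : Z) : Perm (Fin n))⁻¹ =
          (g : Perm (Fin n)) * ((h : Perm (Fin n)) * c.1 * (h : Perm (Fin n))⁻¹) *
            (g : Perm (Fin n))⁻¹
        rw [Subgroup.coe_mul]
        group) with hψ₁
  have hψ₁app : ∀ (g : Z) (c : {c : Perm (Fin n) // c ∈ x.cycleFactorsFinset}),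
      ((ψ₁ g c : {c : Perm (Fin n) // c ∈ x.cycleFactorsFinset}) : Perm (Fin n)) =
        (g : Perm (Fin n)) * c.1 * (g : Perm (Fin n))⁻¹ := fun g c => rfl
  -- restriction to fixed points
  have hfixiff : ∀ (g : Z) (a : Fin n), x a = a ↔ x ((g : Perm (Fin n)) a) = (g : Perm (Fin n)) a := by
    intro g a
    have hcomm : x ((g : Perm (Fin n)) a) = (g : Perm (Fin n)) (x a) := by
      have h := hmemx g
      calc x ((g : Perm (Fin n)) a) = (x * (g : Perm (Fin n))) a := rfl
        _ = ((g : Perm (Fin n)) * x) a := by rw [h]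
        _ = (g : Perm (Fin n)) (x a) := rfl
    constructor
    · intro h2
      rw [hcomm, h2]
    · intro h2
      rw [hcomm] at h2
      exact (g : Perm (Fin n)).injective h2
  set ψ₂ : Z →* Perm {a : Fin n // x a = a} :=
    MonoidHom.mk' (fun g => Perm.subtypePerm (g : Perm (Fin n)) (fun a => (hfixiff g a).symm))
      (fun g h => by
        ext a
        simp [Perm.subtypePerm_apply]
        rfl) with hψ₂
  set φ := ψ₁.prod ψ₂ with hφ
  -- properties of kernel elements
  have hkerprop : ∀ g : Z, g ∈ φ.ker →
      (∀ c : Perm (Fin n), c ∈ x.cycleFactorsFinset → Commute (g : Perm (Fin n)) c) ∧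
      (∀ a : Fin n, x a = a → (g : Perm (Fin n)) a = a) := by
    intro g hg
    rw [MonoidHom.mem_ker] at hg
    have h1 : ψ₁ g = 1 := congrArg Prod.fst hg
    have h2 : ψ₂ g = 1 := congrArg Prod.snd hg
    constructor
    · intro c hc
      have := congrArg (fun (σ : Perm {c : Perm (Fin n) // c ∈ x.cycleFactorsFinset}) => σ ⟨c, hc⟩) h1
      have h3 : (g : Perm (Fin n)) * c * (g : Perm (Fin n))⁻¹ = c := by
        have h4 := congrArg Subtype.val this
        simpa [hψ₁app] using h4
      have := mul_inv_eq_iff_eq_mul.mp h3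
      exact this
    · intro a ha
      have := congrArg (fun (σ : Perm {a : Fin n // x a = a}) => σ ⟨a, ha⟩) h2
      exact congrArg Subtype.val this
  -- basepoints of cycles
  have hptE : ∀ c : {c : Perm (Fin n) // c ∈ x.cycleFactorsFinset}, ∃ a, c.1 a ≠ a := by
    intro c
    obtain ⟨a, ha, -⟩ := (hcyc c.1 c.2).1
    exact ⟨a, ha⟩
  choose pt hpt using hptE
  -- kernel bound
  have hker : Nat.card φ.ker ≤ p ^ m := by
    have hNZ : NeZero p := ⟨hp.pos.ne'⟩
    have hexp : ∀ (g : φ.ker) (c : {c : Perm (Fin n) // c ∈ x.cycleFactorsFinset}),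
        ∃ i : ℕ, (c.1 ^ i) (pt c) = ((g : Z) : Perm (Fin n)) (pt c) := by
      intro g c
      obtain ⟨hcomm, -⟩ := hkerprop (g : Z) g.2
      have hcycc := (hcyc c.1 c.2).1
      -- g (pt c) is in the support of c
      have hmem : ((g : Z) : Perm (Fin n)) (pt c) ∈ c.1.support :=
        (mem_support_iff_of_commute (hcomm c.1 c.2) (pt c)).mpr (mem_support.mpr (hpt c))
      have hsc : c.1.SameCycle (pt c) (((g : Z) : Perm (Fin n)) (pt c)) :=
        hcycc.sameCycle (hpt c) (mem_support.mp hmem)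
      obtain ⟨i, -, hi⟩ := hsc.exists_pow_eq'
      exact ⟨i, hi⟩
    choose expf hexpf using hexp
    have hinj : Function.Injective
        (fun g : φ.ker => fun c : {c : Perm (Fin n) // c ∈ x.cycleFactorsFinset} =>
          ((expf g c : ZMod p))) := by
      intro g h hgh
      have hG := hkerprop (g : Z) g.2
      have hH := hkerprop (h : Z) h.2
      apply Subtype.ext
      apply Subtype.ext
      refine Equiv.ext fun a => ?_
      by_cases hxa : x a = a
      · rw [hG.2 a hxa, hH.2 a hxa]
      · -- a lies in the support of some cycle factor
        have hax : a ∈ x.support := mem_support.mpr hxa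
        have hcmem : x.cycleOf a ∈ x.cycleFactorsFinset :=
          cycleOf_mem_cycleFactorsFinset_iff.mpr hax
        have hamem' : a ∈ (x.cycleOf a).support := by
          rw [mem_support_cycleOf_iff]
          exact ⟨Equiv.Perm.SameCycle.refl x a, hax⟩
        set c : {c : Perm (Fin n) // c ∈ x.cycleFactorsFinset} := ⟨x.cycleOf a, hcmem⟩ with hc
        have hcycc := (hcyc c.1 c.2).1
        have hordc := (hcyc c.1 c.2).2
        have hamem : a ∈ c.1.support := hamem'
        have hsc : c.1.SameCycle (pt c) a := hcycc.sameCycle (hpt c) (mem_support.mp hamem)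
        obtain ⟨j, -, hj⟩ := hsc.exists_pow_eq'
        -- compare exponents
        have hcast : ((expf g c : ZMod p)) = ((expf h c : ZMod p)) := congrFun hgh c
        have hmodeq : expf g c ≡ expf h c [MOD p] := (ZMod.natCast_eq_natCast_iff _ _ _).mp hcast
        have hpow : c.1 ^ (expf g c) = c.1 ^ (expf h c) := by
          rw [pow_eq_pow_iff_modEq, hordc]
          exact hmodeq
        have hgpt : ((g : Z) : Perm (Fin n)) (pt c) = ((h : Z) : Perm (Fin n)) (pt c) := by
          rw [← hexpf g c, ← hexpf h c, hpow]
        -- transport along the cycle using commutation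
        have hgc : Commute ((g : Z) : Perm (Fin n)) (c.1 ^ j) := (hG.1 c.1 c.2).pow_right j
        have hhc : Commute ((h : Z) : Perm (Fin n)) (c.1 ^ j) := (hH.1 c.1 c.2).pow_right j
        calc ((g : Z) : Perm (Fin n)) a = ((g : Z) : Perm (Fin n)) ((c.1 ^ j) (pt c)) := by rw [hj]
          _ = (((g : Z) : Perm (Fin n)) * c.1 ^ j) (pt c) := rfl
          _ = (c.1 ^ j * ((g : Z) : Perm (Fin n))) (pt c) := by rw [hgc]
          _ = (c.1 ^ j) (((g : Z) : Perm (Fin n)) (pt c)) := rfl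
          _ = (c.1 ^ j) (((h : Z) : Perm (Fin n)) (pt c)) := by rw [hgpt]
          _ = (c.1 ^ j * ((h : Z) : Perm (Fin n))) (pt c) := rfl
          _ = (((h : Z) : Perm (Fin n)) * c.1 ^ j) (pt c) := by rw [hhc]
          _ = ((h : Z) : Perm (Fin n)) ((c.1 ^ j) (pt c)) := rfl
          _ = ((h : Z) : Perm (Fin n)) a := by rw [hj]
    calc Nat.card φ.ker ≤
        Nat.card ({c : Perm (Fin n) // c ∈ x.cycleFactorsFinset} → ZMod p) :=
          Nat.card_le_card_of_injective _ hinj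
      _ = p ^ m := by
          rw [Nat.card_eq_fintype_card, Fintype.card_fun, ZMod.card, Fintype.card_coe]
  -- codomain bound
  have hcod : Nat.card {z : Perm {c : Perm (Fin n) // c ∈ x.cycleFactorsFinset} ×
      Perm {a : Fin n // x a = a} // pElem p z} ≤
        m.factorial * tc p (Fintype.card {a : Fin n // x a = a}) := by
    have hinj2 : Function.Injective
        (fun z : {z : Perm {c : Perm (Fin n) // c ∈ x.cycleFactorsFinset} ×
            Perm {a : Fin n // x a = a} // pElem p z} =>
          (z.1.1, (⟨z.1.2, by
            obtain ⟨k, hk⟩ := z.2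
            exact pElem_of_dvd hp (hk ▸ orderOf_map_dvd (MonoidHom.snd _ _) z.1)⟩ :
            {τ : Perm {a : Fin n // x a = a} // pElem p τ}))) := by
      rintro ⟨⟨z1, z2⟩, hz⟩ ⟨⟨w1, w2⟩, hw⟩ hzw
      simp only [Prod.mk.injEq, Subtype.mk.injEq] at hzw
      apply Subtype.ext
      show (z1, z2) = (w1, w2)
      rw [hzw.1, hzw.2]
    calc Nat.card {z : Perm {c : Perm (Fin n) // c ∈ x.cycleFactorsFinset} ×
          Perm {a : Fin n // x a = a} // pElem p z}
        ≤ Nat.card (Perm {c : Perm (Fin n) // c ∈ x.cycleFactorsFinset} ×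
            {τ : Perm {a : Fin n // x a = a} // pElem p τ}) :=
          Nat.card_le_card_of_injective _ hinj2
      _ = m.factorial * tc p (Fintype.card {a : Fin n // x a = a}) := by
          rw [Nat.card_prod]
          congr 1
          · rw [Nat.card_eq_fintype_card, Fintype.card_perm, Fintype.card_coe]
          · exact card_pElem_congr (permMulCongr (Fintype.equivFin {a : Fin n // x a = a}))
  calc Nat.card {y : Perm (Fin n) // pElem p y ∧ x * y = y * x}
      = Nat.card {g : Z // pElem p g} := Nat.card_congr e1
    _ ≤ Nat.card φ.ker * Nat.card {z : Perm {c : Perm (Fin n) // c ∈ x.cycleFactorsFinset} ×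
          Perm {a : Fin n // x a = a} // pElem p z} := card_pElem_le_of_hom hp φ
    _ ≤ p ^ m * (m.factorial * tc p (Fintype.card {a : Fin n // x a = a})) :=
        Nat.mul_le_mul hker hcod
    _ = p ^ m * m.factorial * tc p (Fintype.card {a : Fin n // x a = a}) := by ring

end Cent


/-- Proposition 3.8(i): for `n ≥ 5` and an odd prime `p`, if `x ∈ S_n` has order `p`, then the
proportion of `p`-elements of `A_n` commuting with `x` is at most `1/p`. -/
theorem prop_sym_i (n : ℕ) (hn : 5 ≤ n) (p : ℕ) (hp : p.Prime) (hodd : Odd p)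
    (x : Equiv.Perm (Fin n)) (hx : orderOf x = p) :
    p * Nat.card {y : Equiv.Perm (Fin n) //
        y ∈ alternatingGroup (Fin n) ∧ pElem p y ∧ x * y = y * x} ≤
      Nat.card {y : Equiv.Perm (Fin n) // y ∈ alternatingGroup (Fin n) ∧ pElem p y} := by
  classical
  have halt : ∀ y : Perm (Fin n), pElem p y → y ∈ alternatingGroup (Fin n) := by
    intro y hy
    obtain ⟨k, hk⟩ := hy
    rw [Equiv.Perm.mem_alternatingGroup]
    have h1 : (Equiv.Perm.sign y) ^ (p ^ k) = 1 := by
      rw [← map_pow, ← hk, pow_orderOf_eq_one, map_one]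
    rcases Int.units_eq_one_or (Equiv.Perm.sign y) with h | h
    · exact h
    · exfalso
      rw [h, Odd.neg_one_pow (hodd.pow)] at h1
      exact absurd h1 (by decide)
  have eL : {y : Perm (Fin n) // y ∈ alternatingGroup (Fin n) ∧ pElem p y ∧ x * y = y * x} ≃
      {y : Perm (Fin n) // pElem p y ∧ x * y = y * x} :=
    Equiv.subtypeEquivRight (fun y => ⟨fun h => h.2, fun h => ⟨halt y h.1, h⟩⟩)
  have eR : {y : Perm (Fin n) // y ∈ alternatingGroup (Fin n) ∧ pElem p y} ≃
      {y : Perm (Fin n) // pElem p y} :=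
    Equiv.subtypeEquivRight (fun y => ⟨fun h => h.2, fun h => ⟨halt y h, h⟩⟩)
  rw [Nat.card_congr eL, Nat.card_congr eR]
  set m := x.cycleFactorsFinset.card with hm
  obtain ⟨m', hm'⟩ := Equiv.Perm.cycleType_prime_order (σ := x) (by rw [hx]; exact hp)
  rw [hx] at hm'
  have hmm : m = m' + 1 := by
    have h0 : x.cycleType.card = m := by
      unfold Equiv.Perm.cycleType
      simp [hm]
    rw [hm'] at h0
    simpa [Multiset.card_replicate] using h0.symm
  have hsum : x.support.card = p * m := by
    have h0 := Equiv.Perm.sum_cycleType x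
    rw [hm'] at h0
    rw [← h0, Multiset.sum_replicate, hmm]
    simp [mul_comm]
  have hfixcard : Fintype.card {a : Fin n // x a = a} = n - p * m := by
    have h1 : Fintype.card {a : Fin n // ¬ (a ∈ x.support)} =
        Fintype.card (Fin n) - Fintype.card {a : Fin n // a ∈ x.support} :=
      Fintype.card_subtype_compl _
    have h2 : Fintype.card {a : Fin n // a ∈ x.support} = x.support.card :=
      Fintype.card_coe _
    have h3 : Fintype.card {a : Fin n // x a = a} =
        Fintype.card {a : Fin n // ¬ (a ∈ x.support)} :=
      Fintype.card_congr (Equiv.subtypeEquivRight (fun a => by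
        simp [Equiv.Perm.notMem_support, eq_comm]))
    rw [h3, h1, h2, hsum, Fintype.card_fin]
  have hsuppn : x.support.card ≤ n := by
    have := Finset.card_le_card (Finset.subset_univ x.support)
    simpa using this
  have hn' : p * m + (n - p * m) = n := by omega
  have hm1 : 1 ≤ m := by omega
  have hC := centralizer_bound hp x hx
  rw [hfixcard] at hC
  have hmain := main_ineq p hp hodd m hm1 (n - p * m) (by omega)
  calc p * Nat.card {y : Perm (Fin n) // pElem p y ∧ x * y = y * x}
      ≤ p * (p ^ m * m.factorial * tc p (n - p * m)) := Nat.mul_le_mul_left _ hC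
    _ = p ^ (m + 1) * m.factorial * tc p (n - p * m) := by ring
    _ ≤ tc p (p * m + (n - p * m)) := hmain
    _ = Nat.card {y : Perm (Fin n) // pElem p y} := by rw [hn']; rfl
end

section
/- Let n ≥ 5 and let x be a transposition in the symmetric group S_n. Then the proportion of 2-elements of S_n that commute with x is at most 1/2; that is, 2 · |{y ∈ S_n : y is a 2-element and x*y = y*x}| ≤ |(S_n)_2|, where (S_n)_2 is the set of 2-elements of S_n. -/
lemma pElem_of_dvd_s15 {G : Type*} [Group G] {y : G} {m : ℕ} (h : orderOf y ∣ 2 ^ m) :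
    pElem 2 y := by
  obtain ⟨i, _, hi⟩ := (Nat.dvd_prime_pow Nat.prime_two).mp h
  exact ⟨i, hi⟩

lemma pElem_mul {G : Type*} [Group G] {a b : G} (h : Commute a b)
    (ha : pElem 2 a) (hb : pElem 2 b) : pElem 2 (a * b) := by
  obtain ⟨j, hj⟩ := ha
  obtain ⟨k, hk⟩ := hb
  refine pElem_of_dvd_s15 (m := max j k) (h.orderOf_mul_dvd_lcm.trans (Nat.lcm_dvd ?_ ?_))
  · rw [hj]; exact pow_dvd_pow 2 (le_max_left j k)
  · rw [hk]; exact pow_dvd_pow 2 (le_max_right j k)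

lemma pElem_conj {G : Type*} [Group G] {y : G} (hy : pElem 2 y) (g : G) :
    pElem 2 (g * y * g⁻¹) := by
  obtain ⟨k, hk⟩ := hy
  have h : SemiconjBy g y (g * y * g⁻¹) := by
    unfold SemiconjBy; group
  exact ⟨k, (h.orderOf_eq g).symm.trans hk⟩

lemma pElem_swap {n : ℕ} {a c : Fin n} (h : a ≠ c) : pElem 2 (Equiv.swap a c) := by
  refine ⟨1, ?_⟩
  rw [pow_one]
  refine orderOf_eq_prime ?_ ?_
  · rw [sq, Equiv.swap_mul_self]
  · simp [Equiv.swap_eq_one_iff, h]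

lemma commute_swap_of_fixes {n : ℕ} {y : Equiv.Perm (Fin n)} {a c : Fin n}
    (ha : y a = a) (hc : y c = c) : Commute (Equiv.swap a c) y := by
  refine Equiv.Perm.Disjoint.commute (fun p => ?_)
  by_cases hpa : p = a
  · subst hpa; right; exact ha
  by_cases hpc : p = c
  · subst hpc; right; exact hc
  · left; exact Equiv.swap_apply_of_ne_of_ne hpa hpc

/-- Proposition 3.8(iii): for `n ≥ 5`, if `x ∈ S_n` is a transposition, then the proportion of
`2`-elements of `S_n` commuting with `x` is at most `1/2`. -/
theorem prop_sym_iii (n : ℕ) (hn : 5 ≤ n)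
    (x : Equiv.Perm (Fin n)) (hx : x.IsSwap) :
    2 * Nat.card {y : Equiv.Perm (Fin n) // pElem 2 y ∧ x * y = y * x} ≤
      Nat.card {y : Equiv.Perm (Fin n) // pElem 2 y} := by
  classical
  obtain ⟨a, b, hab, rfl⟩ := hx
  -- find a third point
  obtain ⟨c, hc⟩ : (({a, b}ᶜ : Finset (Fin n))).Nonempty := by
    rw [← Finset.card_pos, Finset.card_compl]
    have h2 : ({a, b} : Finset (Fin n)).card ≤ 2 :=
      (Finset.card_insert_le a {b}).trans (by simp)
    simp only [Fintype.card_fin]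
    omega
  simp only [Finset.mem_compl, Finset.mem_insert, Finset.mem_singleton, not_or] at hc
  obtain ⟨hca, hcb⟩ := hc
  have hac : a ≠ c := fun h => hca h.symm
  have hbc : b ≠ c := fun h => hcb h.symm
  -- swap evaluation facts
  have sab_a : Equiv.swap a b a = b := Equiv.swap_apply_left a b
  have sab_b : Equiv.swap a b b = a := Equiv.swap_apply_right a b
  have sab_c : Equiv.swap a b c = c := Equiv.swap_apply_of_ne_of_ne hca hcb
  have sac_a : Equiv.swap a c a = c := Equiv.swap_apply_left a c
  have sac_c : Equiv.swap a c c = a := Equiv.swap_apply_right a c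
  have sac_b : Equiv.swap a c b = b := Equiv.swap_apply_of_ne_of_ne hab.symm hbc
  have sbc_b : Equiv.swap b c b = c := Equiv.swap_apply_left b c
  have sbc_c : Equiv.swap b c c = b := Equiv.swap_apply_right b c
  have sbc_a : Equiv.swap b c a = a := Equiv.swap_apply_of_ne_of_ne hab hac
  -- dichotomy for commuting elements
  have hy_cases : ∀ y : Equiv.Perm (Fin n), Equiv.swap a b * y = y * Equiv.swap a b →
      (y a = a ∧ y b = b) ∨ (y a = b ∧ y b = a) := by
    intro y hcomm
    have h1 : y b = Equiv.swap a b (y a) := by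
      have := congrArg (fun z : Equiv.Perm (Fin n) => z a) hcomm.symm
      simpa [Equiv.Perm.mul_apply, sab_a] using this
    have h2 : y a = Equiv.swap a b (y b) := by
      have := congrArg (fun z : Equiv.Perm (Fin n) => z b) hcomm.symm
      simpa [Equiv.Perm.mul_apply, sab_b] using this
    by_cases hya : y a = a
    · left
      refine ⟨hya, ?_⟩
      rw [hya, sab_a] at h1
      exact h1
    by_cases hya' : y a = b
    · right
      refine ⟨hya', ?_⟩
      rw [hya', sab_b] at h1
      exact h1
    · exfalso
      rw [Equiv.swap_apply_of_ne_of_ne hya hya'] at h1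
      exact hab (y.injective h1.symm)
  -- the shifting map
  set G : Equiv.Perm (Fin n) → Equiv.Perm (Fin n) := fun y =>
    if y a = a then Equiv.swap a c * (Equiv.swap b c * y * Equiv.swap b c)
    else Equiv.swap b c * (Equiv.swap a c * (Equiv.swap a b * y) * Equiv.swap a c) with hG
  have hGspec : ∀ y : Equiv.Perm (Fin n), pElem 2 y →
      Equiv.swap a b * y = y * Equiv.swap a b →
      pElem 2 (G y) ∧ ((y a = a ∧ G y c = a) ∨ (y a = b ∧ G y c = b)) := by
    intro y hy2 hcomm
    rcases hy_cases y hcomm with ⟨hya, hyb⟩ | ⟨hya, hyb⟩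
    · set w := Equiv.swap b c * y * Equiv.swap b c with hw
      have hGy : G y = Equiv.swap a c * w := by
        simp only [hG]; rw [if_pos hya]
      have hw2 : pElem 2 w := by
        have := pElem_conj hy2 (Equiv.swap b c)
        rwa [Equiv.swap_inv] at this
      have hwa : w a = a := by
        simp only [hw, Equiv.Perm.mul_apply, sbc_a, hya]
      have hwc : w c = c := by
        simp only [hw, Equiv.Perm.mul_apply, sbc_c, hyb, sbc_b]
      refine ⟨?_, Or.inl ⟨hya, ?_⟩⟩
      · rw [hGy]
        exact pElem_mul (commute_swap_of_fixes hwa hwc) (pElem_swap hac) hw2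
      · rw [hGy, Equiv.Perm.mul_apply, hwc, sac_c]
    · have hcomm' : Commute (Equiv.swap a b) y := hcomm
      have hv2 : pElem 2 (Equiv.swap a b * y) := pElem_mul hcomm' (pElem_swap hab) hy2
      set w := Equiv.swap a c * (Equiv.swap a b * y) * Equiv.swap a c with hw
      have hGy : G y = Equiv.swap b c * w := by
        have hne : ¬ y a = a := by rw [hya]; exact fun h => hab h.symm
        simp only [hG]; rw [if_neg hne]
      have hw2 : pElem 2 w := by
        have := pElem_conj hv2 (Equiv.swap a c)
        rwa [Equiv.swap_inv] at this
      have hwb : w b = b := by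
        simp only [hw, Equiv.Perm.mul_apply, sac_b, hyb, sab_a]
      have hwc : w c = c := by
        simp only [hw, Equiv.Perm.mul_apply, sac_c, hya, sab_b, sac_a]
      refine ⟨?_, Or.inr ⟨hya, ?_⟩⟩
      · rw [hGy]
        exact pElem_mul (commute_swap_of_fixes hwb hwc) (pElem_swap hbc) hw2
      · rw [hGy, Equiv.Perm.mul_apply, hwc, sbc_c]
  -- G y never commutes with swap a b
  have hGnc : ∀ y : Equiv.Perm (Fin n), pElem 2 y →
      Equiv.swap a b * y = y * Equiv.swap a b →
      ¬ (Equiv.swap a b * G y = G y * Equiv.swap a b) := by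
    intro y hy2 hcomm h
    obtain ⟨-, hcase⟩ := hGspec y hy2 hcomm
    have hc' : (Equiv.swap a b * G y) c = (G y * Equiv.swap a b) c := by rw [h]
    rw [Equiv.Perm.mul_apply, Equiv.Perm.mul_apply, sab_c] at hc'
    rcases hcase with ⟨-, hzc⟩ | ⟨-, hzc⟩
    · rw [hzc, sab_a] at hc'
      exact hab hc'.symm
    · rw [hzc, sab_b] at hc'
      exact hab hc'
  -- G is injective on commuting 2-elements
  have hGinj : ∀ y y' : Equiv.Perm (Fin n), pElem 2 y →
      Equiv.swap a b * y = y * Equiv.swap a b → pElem 2 y' →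
      Equiv.swap a b * y' = y' * Equiv.swap a b → G y = G y' → y = y' := by
    intro y y' hy2 hyc hy2' hyc' heq
    rcases (hGspec y hy2 hyc).2 with ⟨hya, hzc⟩ | ⟨hya, hzc⟩ <;>
      rcases (hGspec y' hy2' hyc').2 with ⟨hya', hzc'⟩ | ⟨hya', hzc'⟩
    · have e1 : G y = Equiv.swap a c * (Equiv.swap b c * y * Equiv.swap b c) := by
        simp only [hG]; rw [if_pos hya]
      have e2 : G y' = Equiv.swap a c * (Equiv.swap b c * y' * Equiv.swap b c) := by
        simp only [hG]; rw [if_pos hya']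
      rw [e1, e2] at heq
      have := mul_right_cancel (mul_left_cancel heq)
      exact mul_left_cancel this
    · exact absurd (heq ▸ hzc) (by rw [hzc']; exact fun h => hab h.symm)
    · exact absurd (heq ▸ hzc) (by rw [hzc']; exact hab)
    · have hne : ¬ y a = a := by rw [hya]; exact fun h => hab h.symm
      have hne' : ¬ y' a = a := by rw [hya']; exact fun h => hab h.symm
      have e1 : G y = Equiv.swap b c *
          (Equiv.swap a c * (Equiv.swap a b * y) * Equiv.swap a c) := by
        simp only [hG]; rw [if_neg hne]
      have e2 : G y' = Equiv.swap b c *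
          (Equiv.swap a c * (Equiv.swap a b * y') * Equiv.swap a c) := by
        simp only [hG]; rw [if_neg hne']
      rw [e1, e2] at heq
      have := mul_left_cancel (mul_right_cancel (mul_left_cancel heq))
      exact mul_left_cancel this
  -- assemble the injection
  have keyinj : Function.Injective
      (Sum.elim
        (fun y : {y : Equiv.Perm (Fin n) //
            pElem 2 y ∧ Equiv.swap a b * y = y * Equiv.swap a b} =>
          (⟨y.1, y.2.1⟩ : {y : Equiv.Perm (Fin n) // pElem 2 y}))
        (fun y : {y : Equiv.Perm (Fin n) //
            pElem 2 y ∧ Equiv.swap a b * y = y * Equiv.swap a b} =>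
          (⟨G y.1, (hGspec y.1 y.2.1 y.2.2).1⟩ :
            {y : Equiv.Perm (Fin n) // pElem 2 y}))) := by
    rintro (y | y) (y' | y') huv <;>
      simp only [Sum.elim_inl, Sum.elim_inr] at huv <;>
      rw [Subtype.mk.injEq] at huv
    · exact congrArg Sum.inl (Subtype.ext huv)
    · exact absurd (huv ▸ y.2.2) (hGnc y'.1 y'.2.1 y'.2.2)
    · exact absurd (huv.symm ▸ y'.2.2) (hGnc y.1 y.2.1 y.2.2)
    · exact congrArg Sum.inr (Subtype.ext
        (hGinj y.1 y'.1 y.2.1 y.2.2 y'.2.1 y'.2.2 huv))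
  have hcard := Nat.card_le_card_of_injective _ keyinj
  rw [Nat.card_sum] at hcard
  omega
end

section
/- Let G be a finite group, let p be a prime and let x ∈ O_p(G) be an element that does not lie in the center of O_p(G), i.e. x fails to commute with some element of O_p(G). Then p · |C_G(x)_p| ≤ |G_p|. -/
/-- The `p`-core `O_p(G)`: the join of all normal `p`-subgroups of `G`
(i.e. the largest normal `p`-subgroup when `G` is finite). -/
def pCore (p : ℕ) (G : Type*) [Group G] : Subgroup G :=
  ⨆ (N : Subgroup G) (_ : N.Normal) (_ : IsPGroup p N), N

lemma sSup_pgroup {G : Type*} [Group G] (p : ℕ) (s : Set (Subgroup G)) (hfin : s.Finite)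
    (hs : ∀ N ∈ s, N.Normal ∧ IsPGroup p N) :
    IsPGroup p (sSup s : Subgroup G) ∧ (sSup s : Subgroup G).Normal := by
  induction s, hfin using Set.Finite.induction_on with
  | empty =>
    rw [sSup_empty]
    exact ⟨IsPGroup.of_bot, inferInstance⟩
  | @insert N t _ _ ih =>
    have h1 := hs N (Set.mem_insert _ _)
    have h2 := ih fun M hM => hs M (Set.mem_insert_of_mem _ hM)
    rw [sSup_insert]
    haveI := h1.1
    haveI := h2.2
    exact ⟨IsPGroup.to_sup_of_normal_left h1.2 h2.1, Subgroup.sup_normal _ _⟩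

lemma pCore_eq_sSup (p : ℕ) (G : Type*) [Group G] :
    pCore p G = sSup {N : Subgroup G | N.Normal ∧ IsPGroup p N} := by
  apply le_antisymm
  · exact iSup_le fun N => iSup_le fun hN => iSup_le fun hNp => le_sSup ⟨hN, hNp⟩
  · exact sSup_le fun N hN =>
      le_iSup_of_le N <| le_iSup_of_le hN.1 <| le_iSup_of_le hN.2 le_rfl

lemma pCore_isPGroup {G : Type*} [Group G] [Finite G] (p : ℕ) :
    IsPGroup p (pCore p G) ∧ (pCore p G).Normal := by
  rw [pCore_eq_sSup]
  exact sSup_pgroup p _ (Set.toFinite _) fun N hN => hN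

/-- product of an element of a normal p-subgroup with a p-element is a p-element -/
lemma mul_pElem {G : Type*} [Group G] {p : ℕ} (hp : p.Prime) {Q : Subgroup G}
    (hQp : IsPGroup p Q) (hQn : Q.Normal) {q y : G} (hq : q ∈ Q) (hy : pElem p y) :
    pElem p (q * y) := by
  obtain ⟨k, hk⟩ := hy
  have hz : IsPGroup p (Subgroup.zpowers y) := by
    apply IsPGroup.of_card (n := k)
    rw [Nat.card_zpowers, hk]
  haveI := hQn
  have hsup : IsPGroup p (Q ⊔ Subgroup.zpowers y : Subgroup G) :=
    IsPGroup.to_sup_of_normal_left hQp hz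
  have hmem : q * y ∈ (Q ⊔ Subgroup.zpowers y : Subgroup G) :=
    Subgroup.mul_mem _ (Subgroup.mem_sup_left hq)
      (Subgroup.mem_sup_right (Subgroup.mem_zpowers y))
  obtain ⟨m, hm⟩ := hsup ⟨q * y, hmem⟩
  have hpow : (q * y) ^ p ^ m = 1 := by
    have := congrArg (Subgroup.subtype _) hm
    simpa using this
  obtain ⟨j, _, hj⟩ := (Nat.dvd_prime_pow hp).mp (orderOf_dvd_of_pow_eq_one hpow)
  exact ⟨j, hj⟩

/-- Proposition 3.10: if `x ∈ O_p(G) \ Z(O_p(G))`, then the proportion of `p`-elements of `G`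
commuting with `x` is at most `1/p`. -/
theorem prop_opg (G : Type*) [Group G] [Finite G] (p : ℕ) (hp : p.Prime)
    (x : G) (hxO : x ∈ pCore p G) (hxZ : ∃ y ∈ pCore p G, x * y ≠ y * x) :
    p * Nat.card {y : G // pElem p y ∧ x * y = y * x} ≤ Nat.card {y : G // pElem p y} := by
  classical
  set Q : Subgroup G := pCore p G with hQ
  obtain ⟨hQp, hQn⟩ := pCore_isPGroup (G := G) p
  set x' : Q := ⟨x, hxO⟩ with hx'
  -- centralizer of x in Q
  set K : Subgroup Q := Subgroup.centralizer {x'} with hK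
  have hKne : K ≠ ⊤ := by
    intro h
    obtain ⟨y, hyQ, hyx⟩ := hxZ
    have : (⟨y, hyQ⟩ : Q) ∈ K := h ▸ Subgroup.mem_top _
    rw [hK, Subgroup.mem_centralizer_iff] at this
    have := this x' (Set.mem_singleton _)
    apply hyx
    have := congrArg (Subgroup.subtype Q) this
    simpa using this
  -- the quotient Q ⧸ K has cardinality a power of p, greater than 1
  have hQcard : ∃ n, Nat.card Q = p ^ n := by
    haveI : Fact p.Prime := ⟨hp⟩
    exact IsPGroup.iff_card.mp hQp
  obtain ⟨n, hn⟩ := hQcard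
  have hdvd : Nat.card (Q ⧸ K) ∣ p ^ n := by
    rw [← hn, Subgroup.card_eq_card_quotient_mul_card_subgroup K]
    exact Dvd.intro _ rfl
  obtain ⟨m, _, hm⟩ := (Nat.dvd_prime_pow hp).mp hdvd
  have hm1 : Nat.card (Q ⧸ K) ≠ 1 := by
    rw [← Subgroup.index_eq_card]
    intro h
    exact hKne (Subgroup.index_eq_one.mp h)
  have hmpos : 0 < m := by
    rcases Nat.eq_zero_or_pos m with h | h
    · exfalso; apply hm1; rw [hm, h, pow_zero]
    · exact h
  have hple : p ≤ Nat.card (Q ⧸ K) := by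
    rw [hm]
    calc p = p ^ 1 := (pow_one p).symm
    _ ≤ p ^ m := Nat.pow_le_pow_right hp.pos hmpos
  -- get an embedding Fin p ↪ Q ⧸ K
  haveI : Fintype (Q ⧸ K) := Fintype.ofFinite _
  have hemb : Nonempty (Fin p ↪ Q ⧸ K) := by
    apply Function.Embedding.nonempty_of_card_le
    rwa [Fintype.card_fin, ← Nat.card_eq_fintype_card]
  obtain ⟨e⟩ := hemb
  -- coset representatives
  let q : Fin p → Q := fun i => (e i).out
  have hq : ∀ i, (q i : Q ⧸ K) = e i := fun i => Quotient.out_eq (e i)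
  -- the injection
  let F : Fin p × {y : G // pElem p y ∧ x * y = y * x} → {y : G // pElem p y} :=
    fun z => ⟨(q z.1 : G) * z.2.1, mul_pElem hp hQp hQn (q z.1).2 z.2.2.1⟩
  have hinj : Function.Injective F := by
    rintro ⟨i, y, hy, hycomm⟩ ⟨j, y', hy', hy'comm⟩ hFeq
    have heq : (q i : G) * y = (q j : G) * y' := congrArg Subtype.val hFeq
    -- (q j)⁻¹ * (q i) = y' * y⁻¹ commutes with x
    have hcxy : Commute x y := hycomm
    have hcxy' : Commute x y' := hy'comm
    have hcent : x * (y' * y⁻¹) = (y' * y⁻¹) * x := hcxy'.mul_right hcxy.inv_right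
    have hval2 : (q j : G)⁻¹ * (q i : G) = y' * y⁻¹ := by
      have h3 : (q j : G)⁻¹ * ((q i : G) * y) = y' := by rw [heq]; group
      rw [← h3]; group
    have hmemK : ((q j)⁻¹ * q i : Q) ∈ K := by
      rw [hK, Subgroup.mem_centralizer_iff]
      intro g hg
      rw [Set.mem_singleton_iff] at hg
      subst hg
      apply Subtype.ext
      push_cast
      rw [hval2]
      exact hcent
    have hij : i = j := by
      apply e.injective
      rw [← hq i, ← hq j]
      exact (QuotientGroup.eq.mpr hmemK).symm
    subst hij
    have hyy : y = y' := mul_left_cancel heq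
    subst hyy
    rfl
  have hcard := Nat.card_le_card_of_injective F hinj
  rwa [Nat.card_prod, Nat.card_eq_fintype_card (α := Fin p), Fintype.card_fin] at hcard
end

section
/- Let G be a finite group and let p be the smallest prime divisor of |G|. If the commuting probability Pr(G) is strictly greater than (p^2+p-1)/p^3, then G is abelian. -/
open ConjClasses in
/-- Lemma 4.2: if `p` is the smallest prime divisor of `|G|` and the commuting probability of
`G` exceeds `(p^2+p-1)/p^3`, then `G` is abelian. -/
theorem lem_gust (G : Type*) [Group G] [Finite G] (h2 : 1 < Nat.card G)
    (p : ℕ) (hp : p = (Nat.card G).minFac)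
    (h : commProb G > ((p : ℚ) ^ 2 + (p : ℚ) - 1) / (p : ℚ) ^ 3) :
    ∀ x y : G, x * y = y * x := by
  classical
  by_contra hna
  push_neg at hna
  obtain ⟨a, b, hab⟩ := hna
  cases nonempty_fintype G
  set n := Nat.card G with hn
  have hp1 : p.Prime := hp ▸ Nat.minFac_prime (by omega)
  have hp2 : 2 ≤ p := hp1.two_le
  have hdiv : ∀ d : ℕ, d ∣ n → 1 < d → p ≤ d := fun d hd hd1 =>
    le_trans (hp ▸ Nat.minFac_le_of_dvd (d.minFac_prime (by omega)).two_le
      (d.minFac_dvd.trans hd)) (Nat.minFac_le (by omega))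
  set Z := Subgroup.center G with hZdef
  set z := Nat.card Z with hz
  set k := Nat.card (ConjClasses G) with hk
  have hZtop : Z ≠ ⊤ := by
    intro hZ
    have ha : a ∈ Subgroup.center G := by rw [← hZdef, hZ]; exact Subgroup.mem_top a
    exact hab ((Subgroup.mem_center_iff.mp ha b).symm)
  set q := Z.index with hq
  have hq_dvd : q ∣ n := Subgroup.index_dvd_card Z
  have hq1 : 1 < q := by
    have h0 : q ≠ 0 := Subgroup.index_ne_zero_of_finite
    have h1 : q ≠ 1 := fun h1 => hZtop (Subgroup.index_eq_one.mp h1)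
    omega
  have hq_np : ¬ q.Prime := by
    intro hqp
    haveI : Fact q.Prime := ⟨hqp⟩
    have hcard : Nat.card (G ⧸ Z) = q := (Subgroup.index_eq_card Z).symm
    haveI : IsCyclic (G ⧸ Z) := isCyclic_of_prime_card hcard
    exact hab (commutative_of_cyclic_center_quotient (QuotientGroup.mk' Z)
      (by rw [QuotientGroup.ker_mk']) a b)
  have hqp2 : p ^ 2 ≤ q := by
    have hrp : q.minFac.Prime := q.minFac_prime (by omega)
    have hr : p ≤ q.minFac := hdiv _ (q.minFac_dvd.trans hq_dvd) hrp.one_lt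
    have hqr : q / q.minFac ∣ n := (Nat.div_dvd_of_dvd q.minFac_dvd).trans hq_dvd
    have hqr1 : 1 < q / q.minFac := by
      by_contra hle
      push_neg at hle
      have hpos : 0 < q / q.minFac := Nat.div_pos (Nat.minFac_le (by omega)) hrp.pos
      have h1 : q / q.minFac = 1 := by omega
      have heq : q = q.minFac := by
        conv_lhs => rw [← Nat.div_mul_cancel q.minFac_dvd, h1, one_mul]
      exact hq_np (heq ▸ hrp)
    have hr2 : p ≤ q / q.minFac := hdiv _ hqr hqr1
    calc p ^ 2 = p * p := sq p
      _ ≤ q.minFac * (q / q.minFac) := Nat.mul_le_mul hr hr2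
      _ = q := Nat.mul_div_cancel' q.minFac_dvd
  have hzq : z * q = n := Subgroup.card_mul_index Z
  have hE4 : p ^ 2 * z ≤ n := by
    calc p ^ 2 * z ≤ q * z := Nat.mul_le_mul_right z hqp2
    _ = n := by rw [mul_comm]; exact hzq
  -- class equation part
  set s : Finset (ConjClasses G) := (noncenter G).toFinset with hs
  set m := s.card with hm
  have hclass : z + ∑ x ∈ s, Nat.card x.carrier = n := by
    have := Group.nat_card_center_add_sum_card_noncenter_eq_card G
    rwa [← Set.coe_toFinset (noncenter G), finsum_mem_coe_finset] at this
  have hterm : ∀ c ∈ s, p ≤ Nat.card c.carrier := by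
    intro c hc
    have hnt : c.carrier.Nontrivial := by
      rw [hs, Set.mem_toFinset] at hc
      exact (ConjClasses.mem_noncenter c).mp hc
    obtain ⟨g, rfl⟩ := ConjClasses.mk_surjective c
    have hcard : Nat.card (ConjClasses.mk g).carrier
        = Fintype.card (MulAction.orbit (ConjAct G) g) := by
      rw [← ConjAct.orbit_eq_carrier_conjClasses, Nat.card_eq_fintype_card]
    have hdvd : Nat.card (ConjClasses.mk g).carrier ∣ n := by
      rw [hcard, hn]
      have horb := MulAction.card_orbit_mul_card_stabilizer_eq_card_group (ConjAct G) g
      have hc2 : Fintype.card (ConjAct G) = Nat.card G := by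
        rw [← Nat.card_eq_fintype_card]; rfl
      exact ⟨_, (horb.trans hc2).symm⟩
    have h1 : 1 < Nat.card (ConjClasses.mk g).carrier := by
      rw [Nat.card_coe_set_eq]
      exact (Set.one_lt_ncard (Set.toFinite _)).mpr hnt
    exact hdiv _ hdvd h1
  have hsum : m * p ≤ ∑ x ∈ s, Nat.card x.carrier := by
    calc m * p = ∑ _x ∈ s, p := by rw [Finset.sum_const, smul_eq_mul]
    _ ≤ _ := Finset.sum_le_sum hterm
  have hE1 : z + m * p ≤ n := hclass ▸ Nat.add_le_add_left hsum z
  have hE3 : z + m = k := by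
    have hzc : z = ((noncenter G)ᶜ : Set (ConjClasses G)).ncard := by
      rw [← Nat.card_coe_set_eq]
      exact Nat.card_congr ((ConjClasses.mk_bijOn G).equiv _)
    have hmc : m = (noncenter G).ncard := (Set.ncard_eq_toFinset_card' _).symm
    rw [hzc, hmc, add_comm, Set.ncard_add_ncard_compl]
  -- final arithmetic in ℚ
  rw [commProb_def'] at h
  have hn0 : (0:ℚ) < (n:ℚ) := by exact_mod_cast Nat.lt_of_lt_of_le Nat.zero_lt_one h2.le
  have hp0 : (0:ℚ) < (p:ℚ) ^ 3 := by positivity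
  rw [gt_iff_lt, div_lt_div_iff₀ hp0 hn0] at h
  have hE1Q : (z:ℚ) + m * p ≤ n := by exact_mod_cast hE1
  have hE4Q : (p:ℚ) ^ 2 * z ≤ n := by exact_mod_cast hE4
  have hE3Q : (z:ℚ) + m = k := by exact_mod_cast hE3
  have hp2Q : (2:ℚ) ≤ p := by exact_mod_cast hp2
  have key1 : (p:ℚ)^2 * ((z:ℚ) + m * p) ≤ p^2 * n :=
    mul_le_mul_of_nonneg_left hE1Q (by positivity)
  have key2 : ((p:ℚ) - 1) * ((p:ℚ)^2 * z) ≤ ((p:ℚ) - 1) * n :=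
    mul_le_mul_of_nonneg_left hE4Q (by linarith)
  nlinarith [h, key1, key2, hE3Q]
end
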